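/- arXiv:2005.05422 — 11 statements merged into one kernel-verified Lean document; each statement's English description precedes it below -/
import Mathlib

section
/- Let k be an odd positive integer and let q be a unit in Z_k. Define β : (Z_k)^3 → (Z_k)^3 by (x,y,z)β = (y - q·z, 2⁻¹·(x + y + q·z), 2⁻¹·(z - q⁻¹·x + q⁻¹·y)), where 2⁻¹ and q⁻¹ denote multiplicative inverses in Z_k. Then β is an involutory automorphism of the additive group (Z_k)^3, i.e. β is additive and β ∘ β = id. -/
/-- β is an involutory automorphism of the additive group (Z_k)³. -/
theorem stmt0 (k : ℕ) (hk : 0 < k) (hodd : Odd k) (q : ZMod k) (hq : IsUnit q)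
    (β : ZMod k × ZMod k × ZMod k → ZMod k × ZMod k × ZMod k)
    (hβ : ∀ x y z : ZMod k, β (x, y, z) =
      (y - q * z, (2 : ZMod k)⁻¹ * (x + y + q * z),
        (2 : ZMod k)⁻¹ * (z - q⁻¹ * x + q⁻¹ * y))) :
    (∀ a b, β (a + b) = β a + β b) ∧ β ∘ β = id := by
  haveI : NeZero k := ⟨hk.ne'⟩
  have h2 : IsUnit (2 : ZMod k) := by
    have : IsUnit ((2 : ℕ) : ZMod k) :=
      (ZMod.isUnit_iff_coprime 2 k).mpr (Nat.coprime_two_left.mpr hodd)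
    simpa using this
  have h21 : (2 : ZMod k) * (2 : ZMod k)⁻¹ = 1 := ZMod.mul_inv_of_unit _ h2
  have hq1 : q * q⁻¹ = 1 := ZMod.mul_inv_of_unit _ hq
  constructor
  · rintro ⟨a1, a2, a3⟩ ⟨b1, b2, b3⟩
    show β (a1 + b1, a2 + b2, a3 + b3) = _
    simp only [hβ, Prod.mk_add_mk, Prod.mk.injEq]
    refine ⟨by ring, by ring, by ring⟩
  · funext p
    obtain ⟨x, y, z⟩ := p
    show β (β (x, y, z)) = (x, y, z)
    rw [hβ, hβ]
    refine Prod.ext ?_ (Prod.ext ?_ ?_) <;> simp only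
    · linear_combination ((2:ZMod k)⁻¹ * x - 2⁻¹ * y) * hq1 + x * h21
    · linear_combination (-(2:ZMod k)⁻¹ * 2⁻¹ * x + 2⁻¹ * 2⁻¹ * y) * hq1 +
        ((2⁻¹ + 1) * y + 2⁻¹ * q * z) * h21
    · linear_combination ((2:ZMod k)⁻¹ * z + 2⁻¹ * 2⁻¹ * z) * hq1 +
        ((2⁻¹ + 1) * z + 2⁻¹ * q⁻¹ * y) * h21
end

section
/- Let m, s, n be positive integers with n ≥ 3 and let r be a unit of Z_n with r^(ms) = ±1. In the graph CPMbar(m,s,n;r), for each 0 ≤ ℓ ≤ s-1 the map τ_ℓ given by ⟨i; (v_0,…,v_{s-1})⟩ ↦ ⟨i; (v_0,…,v_{ℓ-1}, -v_ℓ, v_{ℓ+1},…,v_{s-1})⟩ is an automorphism of CPMbar(m,s,n;r), and for all 0 ≤ ℓ, ℓ' ≤ s-1 one has τ_{ℓ'} ρ_ℓ τ_{ℓ'} = ρ_ℓ^{-1} if ℓ = ℓ' and τ_{ℓ'} ρ_ℓ τ_{ℓ'} = ρ_ℓ otherwise, where ρ_ℓ is the translation automorphism ⟨i; v⟩ ↦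 ⟨i; v + e_ℓ⟩. -/
/-- The graph `CPMbar(m,s,n;r)`: vertex set `Z_{ms} × (Z_n)^s`, where `⟨i;v⟩` is adjacent to
`⟨i+1; v ± r^i · e_ℓ⟩` with `ℓ ≡ i (mod s)`. -/
def cpmBar (m s n : ℕ) (r : ZMod n) :
    SimpleGraph (ZMod (m * s) × (ZMod s → ZMod n)) :=
  SimpleGraph.fromRel (fun x y => ∃ ε : ZMod n, (ε = 1 ∨ ε = -1) ∧
    y.1 = x.1 + 1 ∧
    y.2 = x.2 + Pi.single (ZMod.castHom (dvd_mul_left s m) (ZMod s) x.1) (ε * r ^ x.1.val))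

/-! The reflection `τ_ℓ` acts on `(Z_n)^s` as an additive involution that negates `e_ℓ` and fixes
the other basis vectors. Hence it sends each step `± r^i e_k` of the graph to a step of the same
form, and conjugating the translation by `e_ℓ` with `τ_ℓ'` gives the translation by `τ_ℓ' e_ℓ`. -/

section NegAt

variable {ι G : Type*} [DecidableEq ι] [AddCommGroup G]

def negAt (ℓ : ι) (v : ι → G) : ι → G := fun j => if j = ℓ then -v j else v j

theorem negAt_involutive (ℓ : ι) : Function.Involutive (negAt (G := G) ℓ) := by
  intro v; funext j; by_cases h : j = ℓ <;> simp [negAt, h]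

theorem negAt_add (ℓ : ι) (v w : ι → G) : negAt ℓ (v + w) = negAt ℓ v + negAt ℓ w := by
  funext j; by_cases h : j = ℓ <;> simp [negAt, h, add_comm]

theorem negAt_single (ℓ k : ι) (a : G) :
    negAt ℓ (Pi.single k a) = Pi.single k (if k = ℓ then -a else a) := by
  funext j; by_cases hj : j = k <;> by_cases hk : k = ℓ <;> simp_all [negAt]

end NegAt

theorem SimpleGraph.fromRel_adj_iff_of_involutive {V : Type*} {R : V → V → Prop} {f : V → V}
    (hf : Function.Involutive f) (hR : ∀ x y, R x y → R (f x) (f y)) (x y : V) :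
    (fromRel R).Adj x y ↔ (fromRel R).Adj (f x) (f y) := by
  have key : ∀ x y, (fromRel R).Adj x y → (fromRel R).Adj (f x) (f y) := by
    rintro x y ⟨hne, hxy | hyx⟩
    · exact ⟨hf.injective.ne hne, .inl (hR x y hxy)⟩
    · exact ⟨hf.injective.ne hne, .inr (hR y x hyx)⟩
  refine ⟨key x y, fun h => ?_⟩
  simpa only [hf x, hf y] using key _ _ h

theorem cpmBar_adj_negAt_iff (m s n : ℕ) (r : ZMod n) (ℓ : ZMod s)
    (x y : ZMod (m * s) × (ZMod s → ZMod n)) :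
    (cpmBar m s n r).Adj x y ↔ (cpmBar m s n r).Adj (x.1, negAt ℓ x.2) (y.1, negAt ℓ y.2) := by
  refine SimpleGraph.fromRel_adj_iff_of_involutive (f := Prod.map id (negAt ℓ))
    (fun x => Prod.ext rfl (negAt_involutive ℓ x.2)) ?_ x y
  rintro x y ⟨ε, hε, h1, h2⟩
  set c := ZMod.castHom (dvd_mul_left s m) (ZMod s) x.1
  -- flipping coordinate `c` just flips the sign of the step
  refine ⟨if c = ℓ then -ε else ε, by split_ifs <;> rcases hε with rfl | rfl <;> simp, h1, ?_⟩
  simp only [Prod.map_snd, Prod.map_fst, id, h2, negAt_add, negAt_single]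
  split_ifs
  · rw [neg_mul]
  · rfl

theorem stmt2_general (m s n : ℕ)
    (r : ZMod n) :
    let τ : ZMod s → ZMod (m * s) × (ZMod s → ZMod n) → ZMod (m * s) × (ZMod s → ZMod n) :=
      fun ℓ x => (x.1, fun j => if j = ℓ then -x.2 j else x.2 j)
    let ρ : ZMod s → ZMod (m * s) × (ZMod s → ZMod n) → ZMod (m * s) × (ZMod s → ZMod n) :=
      fun ℓ x => (x.1, x.2 + Pi.single ℓ 1)
    (∀ ℓ : ZMod s, Function.Bijective (τ ℓ) ∧
      ∀ x y, (cpmBar m s n r).Adj x y ↔ (cpmBar m s n r).Adj (τ ℓ x) (τ ℓ y)) ∧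
    (∀ ℓ ℓ' : ZMod s, τ ℓ' ∘ ρ ℓ ∘ τ ℓ' =
      if ℓ = ℓ' then (fun x => (x.1, x.2 - Pi.single ℓ 1)) else ρ ℓ) := by
  intro τ ρ
  have hτ : ∀ ℓ x, τ ℓ x = (x.1, negAt ℓ x.2) := fun _ _ => rfl
  refine ⟨fun ℓ => ⟨?_, fun x y => ?_⟩, fun ℓ ℓ' => ?_⟩
  · exact Function.Involutive.bijective fun x => by simp only [hτ, negAt_involutive ℓ x.2]
  · simpa only [hτ] using cpmBar_adj_negAt_iff m s n r ℓ x y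
  · funext x
    simp only [Function.comp_apply, hτ, ρ, negAt_add, negAt_involutive ℓ' x.2, negAt_single]
    split_ifs <;> simp [sub_eq_add_neg, Pi.single_neg]

/-- each reflection tau_l (negating the l-th component) is an automorphism of
CPMbar, and tau_l' ∘ rho_l ∘ tau_l' equals rho_l⁻¹ when l = l' and rho_l otherwise, where
rho_l is the translation <i;v> ↦ <i;v+e_l>. -/
theorem stmt2 (m s n : ℕ) (hm : 0 < m) (hs : 0 < s) (hn : 3 ≤ n)
    (r : ZMod n) (hu : IsUnit r) (hr : r ^ (m * s) = 1 ∨ r ^ (m * s) = -1) :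
    let τ : ZMod s → ZMod (m * s) × (ZMod s → ZMod n) → ZMod (m * s) × (ZMod s → ZMod n) :=
      fun ℓ x => (x.1, fun j => if j = ℓ then -x.2 j else x.2 j)
    let ρ : ZMod s → ZMod (m * s) × (ZMod s → ZMod n) → ZMod (m * s) × (ZMod s → ZMod n) :=
      fun ℓ x => (x.1, x.2 + Pi.single ℓ 1)
    (∀ ℓ : ZMod s, Function.Bijective (τ ℓ) ∧
      ∀ x y, (cpmBar m s n r).Adj x y ↔ (cpmBar m s n r).Adj (τ ℓ x) (τ ℓ y)) ∧
    (∀ ℓ ℓ' : ZMod s, τ ℓ' ∘ ρ ℓ ∘ τ ℓ' =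
      if ℓ = ℓ' then (fun x => (x.1, x.2 - Pi.single ℓ 1)) else ρ ℓ) :=
  stmt2_general m s n r
end

section
/- Let m, s, n be positive integers with n ≥ 3 and let r be a unit of Z_n with r^(ms) = ±1. The map σ : ⟨i; (v_0, v_1, …, v_{s-1})⟩ ↦ ⟨i+1; (r·v_{s-1}, r·v_0, r·v_1, …, r·v_{s-2})⟩ is an automorphism of the graph CPMbar(m,s,n;r). Moreover σ^{-1} ρ_ℓ σ = ρ_{ℓ+1}^r and σ^{-1} τ_ℓ σ = τ_{ℓ+1} for all 0 ≤ ℓ ≤ s-1, where indices ℓ+1 are computed modulo s, ρ_ℓ is the translation ⟨i;v⟩ ↦ ⟨i; v+e_ℓ⟩ and τ_ℓ negates the ℓ-th component. -/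
lemma cpm_sign_pow {n : ℕ} (r : ZMod n) (ms : ℕ) (hms : 0 < ms)
    (hr : r ^ ms = 1 ∨ r ^ ms = -1) (x : ZMod ms) :
    ∃ c : ZMod n, (c = 1 ∨ c = -1) ∧ c * c = 1 ∧ r ^ (x.val + 1) = c * r ^ (x + 1).val := by
  haveI : NeZero ms := ⟨hms.ne'⟩
  have hv : (x + 1).val = (x.val + 1) % ms := by
    rw [ZMod.val_add, ZMod.val_one_eq_one_mod]
    conv_rhs => rw [Nat.add_mod]
    rw [Nat.mod_eq_of_lt (ZMod.val_lt x)]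
  have key : r ^ (x.val + 1) = (r ^ ms) ^ ((x.val + 1) / ms) * r ^ ((x.val + 1) % ms) := by
    rw [← pow_mul, ← pow_add, Nat.div_add_mod]
  refine ⟨(r ^ ms) ^ ((x.val + 1) / ms), ?_, ?_, by rw [hv, key]⟩
  · rcases hr with h | h <;> rw [h]
    · left; exact one_pow _
    · rcases Nat.even_or_odd ((x.val + 1) / ms) with hq' | hq'
      · left; exact hq'.neg_one_pow
      · right; exact hq'.neg_one_pow
  · rcases hr with h | h <;> rw [h]
    · simp
    · rw [← pow_add]; exact Even.neg_one_pow ⟨_, rfl⟩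

lemma cpm_rel_iff (m s n : ℕ) (hm : 0 < m) (hs : 0 < s) (r : ZMod n) (hu : IsUnit r)
    (hr : r ^ (m * s) = 1 ∨ r ^ (m * s) = -1)
    (x y : ZMod (m * s) × (ZMod s → ZMod n)) :
    (∃ ε : ZMod n, (ε = 1 ∨ ε = -1) ∧ y.1 = x.1 + 1 ∧
      y.2 = x.2 + Pi.single (ZMod.castHom (dvd_mul_left s m) (ZMod s) x.1) (ε * r ^ x.1.val))
    ↔ (∃ ε : ZMod n, (ε = 1 ∨ ε = -1) ∧ y.1 + 1 = x.1 + 1 + 1 ∧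
      (fun j => r * y.2 (j - 1)) = (fun j => r * x.2 (j - 1)) +
        Pi.single (ZMod.castHom (dvd_mul_left s m) (ZMod s) (x.1 + 1)) (ε * r ^ (x.1 + 1).val)) := by
  obtain ⟨c, hc, hcc, hpow⟩ := cpm_sign_pow r (m * s) (Nat.mul_pos hm hs) hr x.1
  have hsign : ∀ a b : ZMod n, (a = 1 ∨ a = -1) → (b = 1 ∨ b = -1) →
      (a * b = 1 ∨ a * b = -1) := by
    rintro a b (rfl | rfl) (rfl | rfl) <;> simp
  have hcast : (ZMod.castHom (dvd_mul_left s m) (ZMod s) (x.1 + 1)) =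
      ZMod.castHom (dvd_mul_left s m) (ZMod s) x.1 + 1 := by
    rw [map_add, map_one]
  constructor
  · rintro ⟨ε, hε, h1, h2⟩
    refine ⟨ε * c, hsign ε c hε hc, by rw [h1], ?_⟩
    funext j
    have h2j := congrFun h2 (j - 1)
    rw [Pi.add_apply] at h2j
    rw [h2j, mul_add, Pi.add_apply]
    congr 1
    rw [Pi.single_apply, Pi.single_apply, hcast]
    by_cases hj : j = ZMod.castHom (dvd_mul_left s m) (ZMod s) x.1 + 1
    · rw [if_pos (sub_eq_iff_eq_add.mpr hj), if_pos hj]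
      rw [show r * (ε * r ^ x.1.val) = ε * r ^ (x.1.val + 1) by ring, hpow]; ring
    · rw [if_neg (fun h => hj (sub_eq_iff_eq_add.mp h)), if_neg hj, mul_zero]
  · rintro ⟨ε, hε, h1, h2⟩
    refine ⟨ε * c, hsign ε c hε hc, by exact add_right_cancel h1, ?_⟩
    funext j
    have h2j := congrFun h2 (j + 1)
    rw [Pi.add_apply, add_sub_cancel_right] at h2j
    apply hu.mul_left_cancel
    rw [h2j, Pi.add_apply, mul_add]
    congr 1
    rw [Pi.single_apply, Pi.single_apply, hcast]
    by_cases hj : j = ZMod.castHom (dvd_mul_left s m) (ZMod s) x.1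
    · rw [if_pos (by rw [hj]), if_pos hj]
      rw [show r * (ε * c * r ^ x.1.val) = ε * c * r ^ (x.1.val + 1) by ring, hpow]
      rw [show ε * c * (c * r ^ (x.1 + 1).val) = ε * (c * c) * r ^ (x.1 + 1).val by ring, hcc]
      ring
    · rw [if_neg (fun h => hj (add_right_cancel h)), if_neg hj, mul_zero]

/-- the shift map sigma is an automorphism of CPMbar, and conjugation by sigma
sends rho_l to rho_{l+1}^r and tau_l to tau_{l+1} (stated as sigma ∘ rho_l = rho_{l+1}^r ∘ sigma,
sigma ∘ tau_l = tau_{l+1} ∘ sigma, which is the right-action identity sigma⁻¹ rho_l sigma = rho_{l+1}^r). -/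
theorem stmt3 (m s n : ℕ) (hm : 0 < m) (hs : 0 < s) (hn : 3 ≤ n)
    (r : ZMod n) (hu : IsUnit r) (hr : r ^ (m * s) = 1 ∨ r ^ (m * s) = -1) :
    let σ : ZMod (m * s) × (ZMod s → ZMod n) → ZMod (m * s) × (ZMod s → ZMod n) :=
      fun x => (x.1 + 1, fun j => r * x.2 (j - 1))
    let ρ : ZMod s → ZMod (m * s) × (ZMod s → ZMod n) → ZMod (m * s) × (ZMod s → ZMod n) :=
      fun ℓ x => (x.1, x.2 + Pi.single ℓ 1)
    let τ : ZMod s → ZMod (m * s) × (ZMod s → ZMod n) → ZMod (m * s) × (ZMod s → ZMod n) :=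
      fun ℓ x => (x.1, fun j => if j = ℓ then -x.2 j else x.2 j)
    (Function.Bijective σ ∧
      ∀ x y, (cpmBar m s n r).Adj x y ↔ (cpmBar m s n r).Adj (σ x) (σ y)) ∧
    (∀ ℓ : ZMod s, σ ∘ ρ ℓ = (fun x => (x.1, x.2 + Pi.single (ℓ + 1) r)) ∘ σ) ∧
    (∀ ℓ : ZMod s, σ ∘ τ ℓ = τ (ℓ + 1) ∘ σ) := by
  intro σ ρ τ
  obtain ⟨u, hur⟩ := hu
  have hbij : Function.Bijective σ := by
    have hinv : Function.LeftInverse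
        (fun x : ZMod (m * s) × (ZMod s → ZMod n) =>
          (x.1 - 1, fun j => (↑u⁻¹ : ZMod n) * x.2 (j + 1))) σ ∧
        Function.RightInverse
        (fun x : ZMod (m * s) × (ZMod s → ZMod n) =>
          (x.1 - 1, fun j => (↑u⁻¹ : ZMod n) * x.2 (j + 1))) σ := by
      constructor
      · intro x
        refine Prod.ext (add_sub_cancel_right _ _) ?_
        funext j
        show (↑u⁻¹ : ZMod n) * (r * x.2 (j + 1 - 1)) = x.2 j
        rw [add_sub_cancel_right, ← hur, ← mul_assoc]
        simp
      · intro x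
        refine Prod.ext (sub_add_cancel _ _) ?_
        funext j
        show r * ((↑u⁻¹ : ZMod n) * x.2 (j - 1 + 1)) = x.2 j
        rw [sub_add_cancel, ← hur, ← mul_assoc]
        simp
    exact ⟨hinv.1.injective, hinv.2.surjective⟩
  refine ⟨⟨hbij, ?_⟩, ?_, ?_⟩
  · intro x y
    have hu' : IsUnit r := ⟨u, hur⟩
    simp only [cpmBar, SimpleGraph.fromRel_adj]
    constructor
    · rintro ⟨hne, h⟩
      refine ⟨fun h' => hne (hbij.injective h'), ?_⟩
      rcases h with h | h
      · exact Or.inl ((cpm_rel_iff m s n hm hs r hu' hr x y).mp h)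
      · exact Or.inr ((cpm_rel_iff m s n hm hs r hu' hr y x).mp h)
    · rintro ⟨hne, h⟩
      refine ⟨fun h' => hne (by rw [h']), ?_⟩
      rcases h with h | h
      · exact Or.inl ((cpm_rel_iff m s n hm hs r hu' hr x y).mpr h)
      · exact Or.inr ((cpm_rel_iff m s n hm hs r hu' hr y x).mpr h)
  · intro ℓ
    funext x
    simp only [Function.comp_apply, σ, ρ]
    refine Prod.ext rfl ?_
    funext j
    dsimp only
    rw [Pi.add_apply, Pi.add_apply, mul_add]
    congr 1
    rw [Pi.single_apply, Pi.single_apply]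
    by_cases hj : j = ℓ + 1
    · rw [if_pos (sub_eq_iff_eq_add.mpr hj), if_pos hj, mul_one]
    · rw [if_neg (fun h => hj (sub_eq_iff_eq_add.mp h)), if_neg hj, mul_zero]
  · intro ℓ
    funext x
    simp only [Function.comp_apply, σ, τ]
    refine Prod.ext rfl ?_
    funext j
    dsimp only
    by_cases hj : j = ℓ + 1
    · rw [if_pos (sub_eq_iff_eq_add.mpr hj), if_pos hj, mul_neg]
    · rw [if_neg (fun h => hj (sub_eq_iff_eq_add.mp h)), if_neg hj]
end

section
/- Let m, s, n be positive integers with n ≥ 2 and let r be a unit of Z_{2n} with r^(ms) = ±1 in Z_{2n}, and suppose n is odd. Let r' be the residue of r modulo n. Then the map reducing each of the s components of the vector modulo n, ⟨i; v⟩ ↦ ⟨i; v mod n⟩, is a graph homomorphism from CPMbar(m,s,2n;r) to CPMbar(m,s,n;r'), and moreover r' is a unit of Z_n with r'^(ms) = ±1. -/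
/-- for n odd, componentwise reduction mod n is a graph homomorphism
CPMbar(m,s,2n;r) → CPMbar(m,s,n;r'), where r' is r mod n; moreover r' is a unit
with r'^(ms) = ±1. -/
theorem stmt4 (m s n : ℕ) (hm : 0 < m) (hs : 0 < s) (hn : 2 ≤ n) (hodd : Odd n)
    (r : ZMod (2 * n)) (hu : IsUnit r) (hr : r ^ (m * s) = 1 ∨ r ^ (m * s) = -1) :
    let r' : ZMod n := ZMod.castHom (dvd_mul_left n 2) (ZMod n) r
    let f : ZMod (m * s) × (ZMod s → ZMod (2 * n)) → ZMod (m * s) × (ZMod s → ZMod n) :=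
      fun x => (x.1, fun j => ZMod.castHom (dvd_mul_left n 2) (ZMod n) (x.2 j))
    (IsUnit r' ∧ (r' ^ (m * s) = 1 ∨ r' ^ (m * s) = -1)) ∧
      ∀ x y, (cpmBar m s (2 * n) r).Adj x y → (cpmBar m s n r').Adj (f x) (f y) := by
  intro r' f
  have hnt : Nontrivial (ZMod n) := by
    haveI : Fact (1 < n) := ⟨by omega⟩
    infer_instance
  set κ : ZMod (2 * n) →+* ZMod n := ZMod.castHom (dvd_mul_left n 2) (ZMod n) with hκ
  have hu' : IsUnit r' := hu.map κ
  -- mapping of the relation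
  have key : ∀ x y : ZMod (m * s) × (ZMod s → ZMod (2 * n)),
      (∃ ε : ZMod (2 * n), (ε = 1 ∨ ε = -1) ∧ y.1 = x.1 + 1 ∧
        y.2 = x.2 + Pi.single (ZMod.castHom (dvd_mul_left s m) (ZMod s) x.1) (ε * r ^ x.1.val)) →
      (∃ ε : ZMod n, (ε = 1 ∨ ε = -1) ∧ (f y).1 = (f x).1 + 1 ∧
        (f y).2 = (f x).2 + Pi.single (ZMod.castHom (dvd_mul_left s m) (ZMod s) (f x).1)
          (ε * r' ^ (f x).1.val)) ∧ (f x).2 ≠ (f y).2 := by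
    intro x y ⟨ε, hε, h1, h2⟩
    set ℓ := ZMod.castHom (dvd_mul_left s m) (ZMod s) x.1 with hℓ
    have hε' : κ ε = 1 ∨ κ ε = -1 := by
      rcases hε with h | h <;> simp [h]
    have h2' : (f y).2 = (f x).2 + Pi.single ℓ (κ ε * r' ^ x.1.val) := by
      funext j
      by_cases hj : j = ℓ
      · subst hj
        show κ (y.2 ℓ) = κ (x.2 ℓ) + _
        rw [h2]
        simp [Pi.single_apply, map_add, map_mul, map_pow, r', ZMod.castHom_apply, hκ]
      · simp [f, h2, Pi.single_apply, hj]
    have hne : (f x).2 ≠ (f y).2 := by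
      intro h
      have := congrFun h2' ℓ
      rw [← h] at this
      have h0 : κ ε * r' ^ x.1.val = 0 := by
        have h3 : (f x).2 ℓ + κ ε * r' ^ x.1.val = (f x).2 ℓ := by
          simpa [Pi.single_apply] using this.symm
        exact add_eq_left.mp h3
      have : IsUnit (κ ε * r' ^ x.1.val) := by
        rcases hε' with h | h <;> simp [h, (hu'.pow _)]
      rw [h0] at this
      exact not_isUnit_zero this
    exact ⟨⟨κ ε, hε', h1, h2'⟩, hne⟩
  refine ⟨⟨hu', ?_⟩, ?_⟩
  · rcases hr with h | h
    · left
      have := congrArg κ h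
      simpa [map_pow] using this
    · right
      have := congrArg κ h
      simpa [map_pow] using this
  · intro x y hadj
    rcases hadj with ⟨hne, hrel | hrel⟩
    · obtain ⟨hrel', hne'⟩ := key x y hrel
      exact ⟨fun h => hne' (congrArg Prod.snd h), Or.inl hrel'⟩
    · obtain ⟨hrel', hne'⟩ := key y x hrel
      exact ⟨fun h => hne' (congrArg Prod.snd h.symm), Or.inr hrel'⟩
end

section
/- Let m, s, n be positive integers with n ≥ 3 and let r be a unit of Z_n with r^(ms) = ±1. Then the map Ψ given by ⟨i; (v_0, v_1, …, v_{s-1})⟩ ↦ ⟨-i; (r·v_{s-1}, r·v_{s-2}, …, r·v_1, r·v_0)⟩ is a graph isomorphism from CPMbar(m,s,n;r) to CPMbar(m,s,n;r^{-1}). In particular, CPMbar(m,s,n;r) and CPMbar(m,s,n;r^{-1}) are isomorphic graphs. -/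
theorem ZMod.val_add_val_neg_one_sub {N : ℕ} [NeZero N] (a : ZMod N) :
    a.val + (-1 - a).val + 1 = N := by
  have hdvd : N ∣ a.val + (-1 - a).val + 1 := by
    rw [← ZMod.natCast_eq_zero_iff]
    push_cast [ZMod.natCast_val, ZMod.cast_id]
    ring
  obtain ⟨k, hk⟩ := hdvd
  have ha := a.val_lt
  have hb := (-1 - a).val_lt
  rcases k with _ | _ | k
  · omega
  · omega
  · nlinarith

theorem pow_val_succ_mul_pow_val_neg_one_sub {M : Type*} [Monoid M] {N : ℕ} [NeZero N]
    (r : M) (a : ZMod N) : r ^ (a.val + 1) * r ^ (-1 - a).val = r ^ N := by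
  rw [← pow_add, add_right_comm, ZMod.val_add_val_neg_one_sub]

theorem pow_eq_one_or_neg_one_of_mul_eq_one {R : Type*} [CommRing R] {a b : R} (hab : a * b = 1)
    {N : ℕ} (ha : a ^ N = 1 ∨ a ^ N = -1) : b ^ N = 1 ∨ b ^ N = -1 := by
  have hN : a ^ N * b ^ N = 1 := by rw [← mul_pow, hab, one_pow]
  rcases ha with ha | ha <;> rw [ha] at hN
  · exact .inl (by simpa using hN)
  · exact .inr (by linear_combination -hN)

namespace cpmBar

variable {m s n : ℕ}

def Step (r : ZMod n) (x y : ZMod (m * s) × (ZMod s → ZMod n)) : Prop :=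
  ∃ ε : ZMod n, (ε = 1 ∨ ε = -1) ∧
    y.1 = x.1 + 1 ∧
    y.2 = x.2 + Pi.single (ZMod.castHom (dvd_mul_left s m) (ZMod s) x.1) (ε * r ^ x.1.val)

theorem adj_iff (r : ZMod n) (x y : ZMod (m * s) × (ZMod s → ZMod n)) :
    (cpmBar m s n r).Adj x y ↔ x ≠ y ∧ (Step r x y ∨ Step r y x) :=
  SimpleGraph.fromRel_adj _ _ _

/-- The paper's `Ψ`: `j ↦ -1 - j` reverses the coordinates `(v_0, …, v_{s-1})`. -/
def reflect (r : ZMod n) (x : ZMod (m * s) × (ZMod s → ZMod n)) :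
    ZMod (m * s) × (ZMod s → ZMod n) :=
  (-x.1, fun j => r * x.2 (-1 - j))

theorem reflect_reflect {a b : ZMod n} (hab : a * b = 1) (x : ZMod (m * s) × (ZMod s → ZMod n)) :
    reflect b (reflect a x) = x := by
  ext j
  · simp [reflect]
  · simp only [reflect, sub_sub_cancel, ← mul_assoc, mul_comm b a, hab, one_mul]

def reflectEquiv {a b : ZMod n} (hab : a * b = 1) :
    ZMod (m * s) × (ZMod s → ZMod n) ≃ ZMod (m * s) × (ZMod s → ZMod n) where
  toFun := reflect a
  invFun := reflect b
  left_inv := reflect_reflect hab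
  right_inv := reflect_reflect (mul_comm a b ▸ hab)

theorem reflect_add_single (c t : ZMod n) (i : ZMod (m * s)) (v : ZMod s → ZMod n) (ℓ : ZMod s) :
    reflect c (i, v + Pi.single ℓ t) = (-i, (reflect c (i, v)).2 + Pi.single (-1 - ℓ) (c * t)) := by
  refine Prod.ext rfl (funext fun j => ?_)
  have hj : -1 - j = ℓ ↔ j = -1 - ℓ := by constructor <;> rintro rfl <;> ring
  simp only [reflect, Pi.add_apply, Pi.single_apply, mul_add, hj]
  split_ifs <;> ring

theorem step_reflect [NeZero (m * s)] {a b : ZMod n} (hab : a * b = 1)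
    (ha : a ^ (m * s) = 1 ∨ a ^ (m * s) = -1) {x y : ZMod (m * s) × (ZMod s → ZMod n)}
    (h : Step a x y) : Step b (reflect a y) (reflect a x) := by
  obtain ⟨ε, hε, h1, h2⟩ := h
  refine ⟨-ε * a ^ (m * s), ?_, ?_, ?_⟩
  · rcases hε with h | h <;> rcases ha with h' | h' <;> simp [h, h']
  · simp [reflect, h1]
  · obtain ⟨i, v⟩ := x
    obtain ⟨i', v'⟩ := y
    dsimp only at h1 h2
    subst h1 h2
    have hi : -(i + 1) = -1 - i := by ring
    have hcoef : -ε * a ^ (m * s) * b ^ (-1 - i).val = -(a * (ε * a ^ i.val)) :=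
      calc -ε * a ^ (m * s) * b ^ (-1 - i).val = -ε * a ^ (i.val + 1) * (a * b) ^ (-1 - i).val := by
            rw [← pow_val_succ_mul_pow_val_neg_one_sub a i, mul_pow]; ring
        _ = -(a * (ε * a ^ i.val)) := by rw [hab, one_pow]; ring
    rw [reflect_add_single, hi, map_sub, map_neg, map_one, hcoef, Pi.single_neg, add_neg_cancel_right]
    rfl

theorem step_iff_step_reflect [NeZero (m * s)] {a b : ZMod n} (hab : a * b = 1)
    (ha : a ^ (m * s) = 1 ∨ a ^ (m * s) = -1) (x y : ZMod (m * s) × (ZMod s → ZMod n)) :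
    Step a x y ↔ Step b (reflect a y) (reflect a x) := by
  refine ⟨step_reflect hab ha, fun h => ?_⟩
  have hb := pow_eq_one_or_neg_one_of_mul_eq_one hab ha
  simpa only [reflect_reflect hab] using step_reflect (mul_comm a b ▸ hab) hb h

theorem adj_iff_adj_reflect [NeZero (m * s)] {a b : ZMod n} (hab : a * b = 1)
    (ha : a ^ (m * s) = 1 ∨ a ^ (m * s) = -1) (x y : ZMod (m * s) × (ZMod s → ZMod n)) :
    (cpmBar m s n a).Adj x y ↔ (cpmBar m s n b).Adj (reflect a x) (reflect a y) := by
  rw [adj_iff, adj_iff, step_iff_step_reflect hab ha x y, step_iff_step_reflect hab ha y x,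
    (Function.LeftInverse.injective (reflect_reflect hab)).ne_iff, or_comm]

def reflectIso [NeZero (m * s)] {a b : ZMod n} (hab : a * b = 1)
    (ha : a ^ (m * s) = 1 ∨ a ^ (m * s) = -1) : cpmBar m s n a ≃g cpmBar m s n b :=
  ⟨reflectEquiv hab, (adj_iff_adj_reflect hab ha _ _).symm⟩

end cpmBar

theorem stmt5_general (m s n : ℕ) (hm : 0 < m) (hs : 0 < s)
    (r : ZMod n) (hu : IsUnit r) (hr : r ^ (m * s) = 1 ∨ r ^ (m * s) = -1) :
    let Ψ : ZMod (m * s) × (ZMod s → ZMod n) → ZMod (m * s) × (ZMod s → ZMod n) :=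
      fun x => (-x.1, fun j => r * x.2 (-1 - j))
    (Function.Bijective Ψ ∧
      ∀ x y, (cpmBar m s n r).Adj x y ↔ (cpmBar m s n r⁻¹).Adj (Ψ x) (Ψ y)) ∧
    Nonempty (cpmBar m s n r ≃g cpmBar m s n r⁻¹) := by
  have : NeZero (m * s) := ⟨(Nat.mul_pos hm hs).ne'⟩
  have hr' : r * r⁻¹ = 1 := ZMod.mul_inv_of_unit r hu
  exact ⟨⟨(cpmBar.reflectEquiv hr').bijective, cpmBar.adj_iff_adj_reflect hr' hr⟩,
    ⟨cpmBar.reflectIso hr' hr⟩⟩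

/-- the map Psi : <i;(v_0,...,v_{s-1})> ↦ <-i;(r v_{s-1},...,r v_0)> is a graph
isomorphism from CPMbar(m,s,n;r) to CPMbar(m,s,n;r⁻¹); in particular the graphs are isomorphic. -/
theorem stmt5 (m s n : ℕ) (hm : 0 < m) (hs : 0 < s) (hn : 3 ≤ n)
    (r : ZMod n) (hu : IsUnit r) (hr : r ^ (m * s) = 1 ∨ r ^ (m * s) = -1) :
    let Ψ : ZMod (m * s) × (ZMod s → ZMod n) → ZMod (m * s) × (ZMod s → ZMod n) :=
      fun x => (-x.1, fun j => r * x.2 (-1 - j))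
    (Function.Bijective Ψ ∧
      ∀ x y, (cpmBar m s n r).Adj x y ↔ (cpmBar m s n r⁻¹).Adj (Ψ x) (Ψ y)) ∧
    Nonempty (cpmBar m s n r ≃g cpmBar m s n r⁻¹) :=
  stmt5_general m s n hm hs r hu hr
end

section
/- Let m, s, n be positive integers with n ≥ 3, let r, r' be units of Z_n with r^(ms) = ±1 and r'^(ms) = ±1, and suppose q := r^{-1}·r' satisfies q^s = ±1. Then the map Φ given by ⟨i; (v_0, v_1, …, v_{s-1})⟩ ↦ ⟨i; (v_0, q·v_1, q²·v_2, …, q^{s-1}·v_{s-1})⟩ is a graph isomorphism from CPMbar(m,s,n;r) to CPMbar(m,s,n;r'). -/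
open Function

section Sign

variable {R : Type*} [Monoid R] [HasDistribNeg R]

lemma pow_mod_eq_or_eq_neg_pow {q : R} {s : ℕ} (hq : q ^ s = 1 ∨ q ^ s = -1) (i : ℕ) :
    q ^ (i % s) = q ^ i ∨ q ^ (i % s) = -q ^ i := by
  have hi : q ^ i = (q ^ s) ^ (i / s) * q ^ (i % s) := by
    rw [← pow_mul, ← pow_add, Nat.div_add_mod]
  rcases hq with h | h
  · left
    rw [hi, h, one_pow, one_mul]
  · rcases neg_one_pow_eq_or R (i / s) with h' | h'
    · left
      rw [hi, h, h', one_mul]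
    · right
      rw [hi, h, h', neg_one_mul, neg_neg]

lemma exists_sign_mul_iff_of_eq_or_eq_neg {a b : R} (hab : a = b ∨ a = -b) (P : R → Prop) :
    (∃ ε : R, (ε = 1 ∨ ε = -1) ∧ P (ε * a)) ↔ (∃ ε : R, (ε = 1 ∨ ε = -1) ∧ P (ε * b)) := by
  rcases hab with rfl | rfl
  · rfl
  have hsign : ∀ ε : R, (-ε = 1 ∨ -ε = -1) ↔ (ε = 1 ∨ ε = -1) := fun ε ↦ by
    rw [neg_eq_iff_eq_neg, neg_eq_iff_eq_neg, neg_neg, or_comm]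
  exact ⟨fun ⟨ε, hε, hP⟩ ↦ ⟨-ε, (hsign ε).2 hε, by rwa [neg_mul_comm]⟩,
    fun ⟨ε, hε, hP⟩ ↦ ⟨-ε, (hsign ε).2 hε, by rwa [neg_mul_neg]⟩⟩

end Sign

lemma ZMod.val_castHom_of_dvd {N s : ℕ} [NeZero N] (h : s ∣ N) (x : ZMod N) :
    (ZMod.castHom h (ZMod s) x).val = x.val % s := by
  rw [ZMod.castHom_apply, ← ZMod.natCast_val, ZMod.val_natCast]

lemma SimpleGraph.fromRel_adj_iff_of_injective {V W : Type*} {r : V → V → Prop}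
    {r' : W → W → Prop} {f : V → W} (hf : Injective f) (h : ∀ x y, r x y ↔ r' (f x) (f y))
    (x y : V) : (fromRel r).Adj x y ↔ (fromRel r').Adj (f x) (f y) := by
  simp only [fromRel_adj, hf.ne_iff, h]

lemma cpmBar_adj_iff_scale {m s n : ℕ} {r r' : ZMod n} {c : ZMod s → ZMod n} (hc : IsUnit c)
    (hcoef : ∀ i : ZMod (m * s), c (ZMod.castHom (dvd_mul_left s m) (ZMod s) i) * r ^ i.val =
      r' ^ i.val ∨ c (ZMod.castHom (dvd_mul_left s m) (ZMod s) i) * r ^ i.val = -r' ^ i.val)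
    (x y : ZMod (m * s) × (ZMod s → ZMod n)) :
    (cpmBar m s n r).Adj x y ↔
      (cpmBar m s n r').Adj (x.1, c * x.2) (y.1, c * y.2) := by
  refine SimpleGraph.fromRel_adj_iff_of_injective (f := fun x ↦ (x.1, c * x.2))
    (injective_id.prodMap hc.mul_right_injective) (fun x y ↦ ?_) x y
  set ℓ := ZMod.castHom (dvd_mul_left s m) (ZMod s) x.1
  have hscale : ∀ ε : ZMod n, y.2 = x.2 + Pi.single ℓ (ε * r ^ x.1.val) ↔
      c * y.2 = c * x.2 + Pi.single ℓ (ε * (c ℓ * r ^ x.1.val)) := fun ε ↦ by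
    rw [mul_left_comm, Pi.single_mul_right, ← mul_add]
    exact hc.mul_right_injective.eq_iff.symm
  simp only [hscale]
  exact exists_sign_mul_iff_of_eq_or_eq_neg (hcoef x.1)
    (fun t ↦ y.1 = x.1 + 1 ∧ c * y.2 = c * x.2 + Pi.single ℓ t)

theorem stmt7_general (m s n : ℕ) (hm : 0 < m) (hs : 0 < s)
    (r r' : ZMod n) (hu : IsUnit r) (hu' : IsUnit r')
    (hq : (r⁻¹ * r') ^ s = 1 ∨ (r⁻¹ * r') ^ s = -1) :
    let q : ZMod n := r⁻¹ * r'
    let Φ : ZMod (m * s) × (ZMod s → ZMod n) → ZMod (m * s) × (ZMod s → ZMod n) :=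
      fun x => (x.1, fun j => q ^ j.val * x.2 j)
    Function.Bijective Φ ∧
      ∀ x y, (cpmBar m s n r).Adj x y ↔ (cpmBar m s n r').Adj (Φ x) (Φ y) := by
  intro q Φ
  have : NeZero (m * s) := ⟨(Nat.mul_pos hm hs).ne'⟩
  have hq_unit : IsUnit q := (IsUnit.of_mul_eq_one r (ZMod.inv_mul_of_unit r hu)).mul hu'
  have hrq : r * q = r' := by rw [← mul_assoc, ZMod.mul_inv_of_unit r hu, one_mul]
  have hc : IsUnit (fun j : ZMod s ↦ q ^ j.val) := Pi.isUnit_iff.2 fun j ↦ hq_unit.pow _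
  refine ⟨bijective_id.prodMap (IsUnit.isUnit_iff_mulLeft_bijective.1 hc),
    cpmBar_adj_iff_scale hc fun i ↦ ?_⟩
  rw [ZMod.val_castHom_of_dvd, ← hrq, mul_pow r q, mul_comm (r ^ _)]
  exact (pow_mod_eq_or_eq_neg_pow hq i.val).imp (congrArg (· * r ^ i.val))
    (fun h ↦ by rw [h, neg_mul])

/-- if q = r⁻¹ r' satisfies q^s = ±1 then
Phi : <i;(v_0,v_1,...,v_{s-1})> ↦ <i;(v_0, q v_1, ..., q^{s-1} v_{s-1})> is a graph
isomorphism from CPMbar(m,s,n;r) to CPMbar(m,s,n;r'). -/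
theorem stmt7 (m s n : ℕ) (hm : 0 < m) (hs : 0 < s) (hn : 3 ≤ n)
    (r r' : ZMod n) (hu : IsUnit r) (hu' : IsUnit r')
    (hr : r ^ (m * s) = 1 ∨ r ^ (m * s) = -1)
    (hr' : r' ^ (m * s) = 1 ∨ r' ^ (m * s) = -1)
    (hq : (r⁻¹ * r') ^ s = 1 ∨ (r⁻¹ * r') ^ s = -1) :
    let q : ZMod n := r⁻¹ * r'
    let Φ : ZMod (m * s) × (ZMod s → ZMod n) → ZMod (m * s) × (ZMod s → ZMod n) :=
      fun x => (x.1, fun j => q ^ j.val * x.2 j)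
    Function.Bijective Φ ∧
      ∀ x y, (cpmBar m s n r).Adj x y ↔ (cpmBar m s n r').Adj (Φ x) (Φ y) :=
  stmt7_general m s n hm hs r r' hu hu' hq
end

section
/- Let m, s, n be positive integers with s ≥ 2, n ≥ 3 and let r be a unit of Z_n with r^(ms) = ±1 and r^(2s) = ±1. Then the map η given by ⟨i; (v_0, v_1, …, v_{s-1})⟩ ↦ ⟨-i; (r^{-2s+1}·v_{s-1}, r^{-2s+3}·v_{s-2}, …, r^{-3}·v_1, r^{-1}·v_0)⟩ is an automorphism of the graph CPMbar(m,s,n;r) that maps the vertex set V_i = {⟨i; v⟩ : v ∈ (Z_n)^s} to V_{-i} for every i ∈ Z_{ms}. -/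
private lemma pm_mul {M : Type*} [Monoid M] [HasDistribNeg M] {a b : M}
    (ha : a = 1 ∨ a = -1) (hb : b = 1 ∨ b = -1) : a * b = 1 ∨ a * b = -1 := by
  rcases ha with rfl | rfl <;> rcases hb with rfl | rfl <;> simp

private lemma pm_neg {M : Type*} [Monoid M] [HasDistribNeg M] {a : M}
    (ha : a = 1 ∨ a = -1) : -a = 1 ∨ -a = -1 := by
  rcases ha with rfl | rfl <;> simp

private lemma pm_pow {M : Type*} [Monoid M] [HasDistribNeg M] {a : M}
    (ha : a = 1 ∨ a = -1) (k : ℕ) : a ^ k = 1 ∨ a ^ k = -1 := by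
  rcases ha with rfl | rfl
  · left; simp
  · rcases Nat.even_or_odd k with h | h
    · left; exact h.neg_one_pow
    · right; exact h.neg_one_pow

private lemma negval {N : ℕ} [NeZero N] (j : ZMod N) : (-1 - j).val = N - 1 - j.val := by
  have hj := ZMod.val_lt j
  have h1 : (0 : ℕ) < N := Nat.pos_of_ne_zero (NeZero.ne N)
  have h2 : ((N - 1 - j.val : ℕ) : ZMod N) = -1 - j := by
    rw [Nat.cast_sub (by omega), Nat.cast_sub (by omega), Nat.cast_one, ZMod.natCast_self,
      ZMod.natCast_val, ZMod.cast_id]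
    ring
  rw [← h2, ZMod.val_cast_of_lt (by omega)]

/-- if r^(2s) = ±1 then
eta : <i;(v_0,...,v_{s-1})> ↦ <-i;(r^{-2s+1} v_{s-1}, r^{-2s+3} v_{s-2}, ..., r^{-1} v_0)>
is an automorphism of CPMbar(m,s,n;r) mapping each fibre V_i to V_-i. -/
theorem stmt8 (m s n : ℕ) (hm : 0 < m) (hs : 2 ≤ s) (hn : 3 ≤ n)
    (r : ZMod n) (hu : IsUnit r) (hr : r ^ (m * s) = 1 ∨ r ^ (m * s) = -1)
    (h2s : r ^ (2 * s) = 1 ∨ r ^ (2 * s) = -1) :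
    let η : ZMod (m * s) × (ZMod s → ZMod n) → ZMod (m * s) × (ZMod s → ZMod n) :=
      fun x => (-x.1, fun j => r⁻¹ ^ (2 * s - 1 - 2 * j.val) * x.2 (-1 - j))
    Function.Bijective η ∧
      (∀ x y, (cpmBar m s n r).Adj x y ↔ (cpmBar m s n r).Adj (η x) (η y)) ∧
      (∀ x, (η x).1 = -x.1) := by
  have hms : 0 < m * s := Nat.mul_pos hm (by omega)
  haveI : NeZero (m * s) := ⟨hms.ne'⟩
  haveI : NeZero s := ⟨by omega⟩
  haveI : NeZero n := ⟨by omega⟩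
  haveI : Fact (1 < n) := ⟨by omega⟩
  intro η
  have hinvmul : r⁻¹ * r = 1 := ZMod.inv_mul_of_unit r hu
  have hrne : r⁻¹ ≠ 0 := by
    intro h; rw [h, zero_mul] at hinvmul; exact one_ne_zero hinvmul.symm
  have hrne0 : r ≠ 0 := by
    intro h; rw [h, mul_zero] at hinvmul; exact one_ne_zero hinvmul.symm
  -- the map on fibres
  set T : (ZMod s → ZMod n) → (ZMod s → ZMod n) :=
    fun v j => r⁻¹ ^ (2 * s - 1 - 2 * j.val) * v (-1 - j) with hTdef
  have hηT : ∀ z : ZMod (m * s) × (ZMod s → ZMod n), (η z).2 = T z.2 := fun _ => rfl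
  have hη1 : ∀ z : ZMod (m * s) × (ZMod s → ZMod n), (η z).1 = -z.1 := fun _ => rfl
  have Tadd : ∀ v w, T (v + w) = T v + T w := by
    intro v w; funext j; simp [T, mul_add]
  have hk : ∀ (e : ℕ) (a : ZMod n), r ^ e * (r⁻¹ ^ e * a) = a := by
    intro e a
    rw [← mul_assoc, ← mul_pow, mul_comm r r⁻¹, hinvmul, one_pow, one_mul]
  have Tinj : Function.Injective T := by
    intro v w h
    funext j
    have h2 := congrFun h (-1 - j)
    simp only [T] at h2
    rw [show (-1 - (-1 - j) : ZMod s) = j by ring] at h2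
    rw [← hk (2 * s - 1 - 2 * (-1 - j).val) (v j), h2, hk]
  have Tsingle : ∀ (ℓ : ZMod s) (c : ZMod n),
      T (Pi.single ℓ c) = Pi.single (-1 - ℓ) (r⁻¹ ^ (1 + 2 * ℓ.val) * c) := by
    intro ℓ c
    funext j
    have hlv := ZMod.val_lt ℓ
    simp only [T]
    rw [Pi.single_apply, Pi.single_apply]
    by_cases h : j = -1 - ℓ
    · subst h
      rw [if_pos (show (-1 - (-1 - ℓ) : ZMod s) = ℓ by ring), if_pos rfl]
      rw [show 2 * s - 1 - 2 * (-1 - ℓ : ZMod s).val = 1 + 2 * ℓ.val by rw [negval]; omega]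
    · rw [if_neg (fun hc => h (by linear_combination -hc)), if_neg h, mul_zero]
  have Tsingle' : ∀ (ℓ : ZMod s) (w : ZMod n),
      Pi.single (-1 - ℓ) w = T (Pi.single ℓ (r ^ (1 + 2 * ℓ.val) * w)) := by
    intro ℓ w
    rw [Tsingle, ← mul_assoc, ← mul_pow, hinvmul, one_pow, one_mul]
  -- injectivity of η
  have hinj : Function.Injective η := by
    intro x y h
    have h1 : x.1 = y.1 := by
      have := congrArg Prod.fst h
      rw [hη1, hη1] at this
      exact neg_injective this
    have h2 : x.2 = y.2 := Tinj (by rw [← hηT, ← hηT, h])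
    exact Prod.ext h1 h2
  -- the exponent key lemma
  have expkey : ∀ i : ZMod (m * s), ∃ δ : ZMod n, (δ = 1 ∨ δ = -1) ∧
      r ^ (1 + 2 * (i.val % s)) * r ^ ((-(i + 1) : ZMod (m * s)).val) = δ * r ^ i.val := by
    intro i
    obtain ⟨e₁, he₁pm, he₁⟩ : ∃ e : ZMod n, (e = 1 ∨ e = -1) ∧ r ^ (m * s) = e := by
      rcases hr with h | h
      exacts [⟨1, Or.inl rfl, h⟩, ⟨-1, Or.inr rfl, h⟩]
    obtain ⟨e₂, he₂pm, he₂⟩ : ∃ e : ZMod n, (e = 1 ∨ e = -1) ∧ r ^ (2 * s) = e := by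
      rcases h2s with h | h
      exacts [⟨1, Or.inl rfl, h⟩, ⟨-1, Or.inr rfl, h⟩]
    have halt : i.val < m * s := ZMod.val_lt i
    have hqt : s * (i.val / s) + i.val % s = i.val := Nat.div_add_mod i.val s
    have hneg : ((-(i + 1) : ZMod (m * s))).val = m * s - 1 - i.val := by
      rw [show (-(i + 1) : ZMod (m * s)) = -1 - i by ring, negval]
    refine ⟨e₁ * e₂ ^ (i.val / s), pm_mul he₁pm (pm_pow he₂pm _), ?_⟩
    rw [hneg]
    have h2q : e₂ ^ (i.val / s) * e₂ ^ (i.val / s) = 1 := by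
      rw [← mul_pow, show e₂ * e₂ = (1 : ZMod n) by rcases he₂pm with rfl | rfl <;> norm_num,
        one_pow]
    have hstep : r ^ (1 + 2 * (i.val % s)) * r ^ (m * s - 1 - i.val) * e₂ ^ (i.val / s)
        = e₁ * r ^ i.val := by
      rw [← he₂, ← pow_mul,
        show 2 * s * (i.val / s) = 2 * (s * (i.val / s)) by ring, ← pow_add, ← pow_add,
        show 1 + 2 * (i.val % s) + (m * s - 1 - i.val) + 2 * (s * (i.val / s))
          = m * s + i.val by omega, pow_add, he₁]
    calc r ^ (1 + 2 * (i.val % s)) * r ^ (m * s - 1 - i.val)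
        = r ^ (1 + 2 * (i.val % s)) * r ^ (m * s - 1 - i.val)
            * (e₂ ^ (i.val / s) * e₂ ^ (i.val / s)) := by rw [h2q, mul_one]
      _ = r ^ (1 + 2 * (i.val % s)) * r ^ (m * s - 1 - i.val) * e₂ ^ (i.val / s)
            * e₂ ^ (i.val / s) := by ring
      _ = e₁ * r ^ i.val * e₂ ^ (i.val / s) := by rw [hstep]
      _ = e₁ * e₂ ^ (i.val / s) * r ^ i.val := by ring
  -- the key adjacency-relation equivalence
  have key : ∀ x y : ZMod (m * s) × (ZMod s → ZMod n),
      (∃ ε : ZMod n, (ε = 1 ∨ ε = -1) ∧ y.1 = x.1 + 1 ∧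
        y.2 = x.2 + Pi.single (ZMod.castHom (dvd_mul_left s m) (ZMod s) x.1)
          (ε * r ^ x.1.val)) ↔
      (∃ ε : ZMod n, (ε = 1 ∨ ε = -1) ∧ (η x).1 = (η y).1 + 1 ∧
        (η x).2 = (η y).2 + Pi.single (ZMod.castHom (dvd_mul_left s m) (ZMod s) (η y).1)
          (ε * r ^ ((η y).1).val)) := by
    intro x y
    obtain ⟨δ, hδpm, hδ⟩ := expkey x.1
    have hδsq : δ * δ = 1 := by rcases hδpm with rfl | rfl <;> norm_num
    set ℓ := ZMod.castHom (dvd_mul_left s m) (ZMod s) x.1 with hℓ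
    have hlval : ℓ.val = x.1.val % s := by
      rw [hℓ, ZMod.castHom_apply, ← ZMod.natCast_val, ZMod.val_natCast]
    constructor
    · rintro ⟨ε, hεpm, hA, hB⟩
      refine ⟨-(ε * δ), pm_neg (pm_mul hεpm hδpm), ?_, ?_⟩
      · rw [hη1, hη1, hA]; ring
      · have hy1 : (η y).1 = -(x.1 + 1) := by rw [hη1, hA]
        rw [hηT, hηT, hy1]
        have hcast' : ZMod.castHom (dvd_mul_left s m) (ZMod s) (-(x.1 + 1)) = -1 - ℓ := by
          rw [hℓ, map_neg, map_add, map_one]; ring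
        rw [hcast', Tsingle' ℓ, ← Tadd]
        apply congrArg T
        have hc : ε * r ^ x.1.val
            + r ^ (1 + 2 * ℓ.val) * (-(ε * δ) * r ^ ((-(x.1 + 1) : ZMod (m * s)).val)) = 0 := by
          rw [hlval]
          linear_combination (-(ε * δ)) * hδ + (-(ε * r ^ x.1.val)) * hδsq
        rw [hB, add_assoc, ← Pi.single_add, hc, Pi.single_zero, add_zero]
    · rintro ⟨ε', hεpm', hA', hB'⟩
      rw [hη1, hη1] at hA'
      have hA : y.1 = x.1 + 1 := by linear_combination hA'
      refine ⟨-(ε' * δ), pm_neg (pm_mul hεpm' hδpm), hA, ?_⟩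
      have hy1 : (η y).1 = -(x.1 + 1) := by rw [hη1, hA]
      rw [hηT, hηT, hy1] at hB'
      have hcast' : ZMod.castHom (dvd_mul_left s m) (ZMod s) (-(x.1 + 1)) = -1 - ℓ := by
        rw [hℓ, map_neg, map_add, map_one]; ring
      rw [hcast', Tsingle' ℓ, ← Tadd] at hB'
      have hB2 : x.2 = y.2 + Pi.single ℓ
          (r ^ (1 + 2 * ℓ.val) * (ε' * r ^ ((-(x.1 + 1) : ZMod (m * s)).val))) := Tinj hB'
      have hc : r ^ (1 + 2 * ℓ.val) * (ε' * r ^ ((-(x.1 + 1) : ZMod (m * s)).val))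
          + -(ε' * δ) * r ^ x.1.val = 0 := by
        rw [hlval]
        linear_combination ε' * hδ
      rw [hB2, add_assoc, ← Pi.single_add, hc, Pi.single_zero, add_zero]
  refine ⟨Finite.injective_iff_bijective.mp hinj, ?_, fun x => rfl⟩
  intro x y
  simp only [cpmBar, SimpleGraph.fromRel_adj]
  exact and_congr (hinj.ne_iff (x := x) (y := y)).symm
    ((or_congr (key x y) (key y x)).trans or_comm)
end

section
/- Let n ≥ 3 be odd and regard the vertex set of CPMbar(n,2,n;1) as the group Z_2 × (Z_n)^3 as above. Let β be the map on (Z_n)^3 given by (x,y,z)β = (y - z, 2⁻¹·(x + y + z), 2⁻¹·(z - x + y)). Then the map ν : ⟨e; v⟩ ↦ ⟨e; vβ⟩ is an automorphism of the graph CPMbar(n,2,n;1) that fixes ⟨0;(0,0,0)⟩ and ⟨1;(1,1,0)⟩ and maps ⟨1;(1,-1,0)⟩ to ⟨1;(-1,0,-1)⟩. -/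
private def stmt10Beta (n : ℕ) (p : ZMod n × ZMod n × ZMod n) :
    ZMod n × ZMod n × ZMod n :=
  (p.2.1 - p.2.2, (2 : ZMod n)⁻¹ * (p.1 + p.2.1 + p.2.2),
    (2 : ZMod n)⁻¹ * (p.2.2 - p.1 + p.2.1))

private lemma stmt10Beta_add (n : ℕ) (p q : ZMod n × ZMod n × ZMod n) :
    stmt10Beta n (p + q) = stmt10Beta n p + stmt10Beta n q := by
  obtain ⟨x, y, z⟩ := p; obtain ⟨x', y', z'⟩ := q
  simp only [stmt10Beta, Prod.mk_add_mk, Prod.mk.injEq]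
  refine ⟨by ring, by ring, by ring⟩

private lemma stmt10Beta_sub (n : ℕ) (p q : ZMod n × ZMod n × ZMod n) :
    stmt10Beta n (p - q) = stmt10Beta n p - stmt10Beta n q := by
  obtain ⟨x, y, z⟩ := p; obtain ⟨x', y', z'⟩ := q
  simp only [stmt10Beta, Prod.mk_sub_mk, Prod.mk.injEq]
  refine ⟨by ring, by ring, by ring⟩

private lemma stmt10Beta_invol (n : ℕ) (h2 : (2 : ZMod n)⁻¹ * 2 = 1)
    (p : ZMod n × ZMod n × ZMod n) : stmt10Beta n (stmt10Beta n p) = p := by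
  obtain ⟨x, y, z⟩ := p
  simp only [stmt10Beta, Prod.mk.injEq]
  refine ⟨by linear_combination x * h2,
    by linear_combination (y + (2 : ZMod n)⁻¹ * (y + z)) * h2,
    by linear_combination (z + (2 : ZMod n)⁻¹ * (y + z)) * h2⟩

private lemma stmt10Beta_f1 (n : ℕ) (h2 : (2 : ZMod n)⁻¹ * 2 = 1) :
    stmt10Beta n (1, 1, 0) = (1, 1, 0) := by
  simp only [stmt10Beta, Prod.mk.injEq]
  refine ⟨by ring, by linear_combination h2, by ring⟩

private lemma stmt10Beta_f2 (n : ℕ) (h2 : (2 : ZMod n)⁻¹ * 2 = 1) :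
    stmt10Beta n (1, -1, 0) = (-1, 0, -1) := by
  simp only [stmt10Beta, Prod.mk.injEq]
  refine ⟨by ring, by ring, by linear_combination -h2⟩

private lemma stmt10Beta_f3 (n : ℕ) (h2 : (2 : ZMod n)⁻¹ * 2 = 1) :
    stmt10Beta n (-1, 0, 1) = (-1, 0, 1) := by
  simp only [stmt10Beta, Prod.mk.injEq]
  refine ⟨by ring, by ring, by linear_combination h2⟩

private lemma stmt10Beta_f4 (n : ℕ) (h2 : (2 : ZMod n)⁻¹ * 2 = 1) :
    stmt10Beta n (-1, 0, -1) = (1, -1, 0) := by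
  simp only [stmt10Beta, Prod.mk.injEq]
  refine ⟨by ring, by linear_combination -h2, by ring⟩

private lemma stmt10Beta_zero (n : ℕ) : stmt10Beta n (0, 0, 0) = (0, 0, 0) := by
  simp only [stmt10Beta, Prod.mk.injEq]
  refine ⟨by ring, by ring, by ring⟩

private lemma stmt10Beta_mem (n : ℕ) (h2 : (2 : ZMod n)⁻¹ * 2 = 1)
    (f : ZMod n × ZMod n × ZMod n)
    (hf : f ∈ ({(1, 1, 0), (1, -1, 0), (-1, 0, 1), (-1, 0, -1)} :
      Set (ZMod n × ZMod n × ZMod n))) :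
    stmt10Beta n f ∈ ({(1, 1, 0), (1, -1, 0), (-1, 0, 1), (-1, 0, -1)} :
      Set (ZMod n × ZMod n × ZMod n)) := by
  simp only [Set.mem_insert_iff, Set.mem_singleton_iff] at hf ⊢
  rcases hf with h | h | h | h <;> subst h
  · exact Or.inl (stmt10Beta_f1 n h2)
  · exact Or.inr (Or.inr (Or.inr (stmt10Beta_f2 n h2)))
  · exact Or.inr (Or.inr (Or.inl (stmt10Beta_f3 n h2)))
  · exact Or.inr (Or.inl (stmt10Beta_f4 n h2))

/-- regarding the vertex set of CPMbar(n,2,n;1) (n odd) as Z_2 × (Z_n)³ with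
adjacency <0;v> ~ <0;v> + <1;f> and <1;v> ~ <1;v> - <1;f> for
f ∈ {(1,1,0), (1,-1,0), (-1,0,1), (-1,0,-1)}, the map ν : <e;v> ↦ <e; vβ>, where
β(x,y,z) = (y - z, 2⁻¹(x+y+z), 2⁻¹(z-x+y)), is a graph automorphism fixing <0;(0,0,0)> and
<1;(1,1,0)> and mapping <1;(1,-1,0)> to <1;(-1,0,-1)>. -/
theorem stmt10 (n : ℕ) (hn : 3 ≤ n) (hodd : Odd n) :
    let P := ZMod n × ZMod n × ZMod n
    let F : Set P := {(1, 1, 0), (1, -1, 0), (-1, 0, 1), (-1, 0, -1)}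
    let G : SimpleGraph (ZMod 2 × P) := SimpleGraph.fromRel (fun a b => ∃ f ∈ F,
      (a.1 = 0 ∧ b = a + ((1 : ZMod 2), f)) ∨ (a.1 = 1 ∧ b = a - ((1 : ZMod 2), f)))
    let β : P → P := fun p => (p.2.1 - p.2.2, (2 : ZMod n)⁻¹ * (p.1 + p.2.1 + p.2.2),
      (2 : ZMod n)⁻¹ * (p.2.2 - p.1 + p.2.1))
    let ν : ZMod 2 × P → ZMod 2 × P := fun a => (a.1, β a.2)
    Function.Bijective ν ∧ (∀ a b, G.Adj a b ↔ G.Adj (ν a) (ν b)) ∧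
      ν (0, (0, 0, 0)) = (0, (0, 0, 0)) ∧ ν (1, (1, 1, 0)) = (1, (1, 1, 0)) ∧
      ν (1, (1, -1, 0)) = (1, (-1, 0, -1)) := by
  intro P F G β ν
  have hNZ : NeZero n := ⟨by omega⟩
  have hu : IsUnit (2 : ZMod n) := by
    have h : ((2 : ℕ) : ZMod n) = (2 : ZMod n) := by push_cast; ring
    rw [← h, ZMod.isUnit_iff_coprime]
    exact hodd.coprime_two_left
  have h2 : (2 : ZMod n)⁻¹ * 2 = 1 := ZMod.inv_mul_of_unit _ hu
  have hβ : β = stmt10Beta n := rfl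
  have hββ : ∀ p : P, β (β p) = p := fun p => by
    rw [hβ]; exact stmt10Beta_invol n h2 p
  have hνν : Function.Involutive ν := by
    rintro ⟨e, p⟩
    exact Prod.ext rfl (hββ p)
  have hβF : ∀ f ∈ F, β f ∈ F := fun f hf => by
    rw [hβ]; exact stmt10Beta_mem n h2 f hf
  set r : ZMod 2 × P → ZMod 2 × P → Prop := fun a b => ∃ f ∈ F,
      (a.1 = 0 ∧ b = a + ((1 : ZMod 2), f)) ∨ (a.1 = 1 ∧ b = a - ((1 : ZMod 2), f))
    with hr
  have hadd : ∀ (e e' : ZMod 2) (p q : P),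
      ((e, p) : ZMod 2 × P) + (e', q) = (e + e', p + q) := fun _ _ _ _ => rfl
  have hsub : ∀ (e e' : ZMod 2) (p q : P),
      ((e, p) : ZMod 2 × P) - (e', q) = (e - e', p - q) := fun _ _ _ _ => rfl
  have hkey : ∀ a b, r a b → r (ν a) (ν b) := by
    rintro ⟨e, p⟩ ⟨e', q⟩ ⟨f, hf, h⟩
    refine ⟨β f, hβF f hf, ?_⟩
    rcases h with ⟨he, hb⟩ | ⟨he, hb⟩
    · rw [hadd] at hb
      have h1 : e' = e + 1 := congrArg Prod.fst hb
      have h2' : q = p + f := congrArg Prod.snd hb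
      refine Or.inl ⟨he, ?_⟩
      show ((e', β q) : ZMod 2 × P) = (e, β p) + (1, β f)
      rw [hadd]
      refine Prod.ext h1 ?_
      show β q = β p + β f
      rw [h2', hβ]
      exact stmt10Beta_add n p f
    · rw [hsub] at hb
      have h1 : e' = e - 1 := congrArg Prod.fst hb
      have h2' : q = p - f := congrArg Prod.snd hb
      refine Or.inr ⟨he, ?_⟩
      show ((e', β q) : ZMod 2 × P) = (e, β p) - (1, β f)
      rw [hsub]
      refine Prod.ext h1 ?_
      show β q = β p - β f
      rw [h2', hβ]
      exact stmt10Beta_sub n p f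
  refine ⟨hνν.bijective, ?_, ?_, ?_, ?_⟩
  · intro a b
    rw [SimpleGraph.fromRel_adj, SimpleGraph.fromRel_adj]
    constructor
    · rintro ⟨hne, h⟩
      refine ⟨fun h' => hne (hνν.injective h'), ?_⟩
      rcases h with h | h
      · exact Or.inl (hkey _ _ h)
      · exact Or.inr (hkey _ _ h)
    · rintro ⟨hne, h⟩
      refine ⟨fun h' => hne (by rw [h']), ?_⟩
      rcases h with h | h
      · have := hkey _ _ h
        rw [hνν a, hνν b] at this
        exact Or.inl this
      · have := hkey _ _ h
        rw [hνν a, hνν b] at this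
        exact Or.inr this
  · exact Prod.ext rfl (stmt10Beta_zero n)
  · exact Prod.ext rfl (stmt10Beta_f1 n h2)
  · exact Prod.ext rfl (stmt10Beta_f2 n h2)
end

section
/- Let m be an even positive integer and s ≥ 2. Define the map a ↦ a* from Z_4 to Z_2 by 0* = 1* = 0 and 2* = 3* = 1. Then the map Ψ sending ⟨i; (v_0,…,v_{s-1})⟩ to (i, (v_ℓ*, v_{ℓ+1}*, …, v_{s-1}*, v_0*, …, v_{ℓ-1}*)), where ℓ ≡ i (mod s), is a graph isomorphism from the connected component CPM(m,s,4;1) of CPMbar(m,s,4;1) containing ⟨0;0⟩ onto the Praeger–Xu graph PX(ms,s). -/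
/-- The Praeger-Xu graph PX(t,s): vertices Z_t × (Z_2)^s, with (i,(v_0,...,v_{s-1}))
adjacent to (i+1,(v_1,...,v_{s-1},b)) for b ∈ Z_2. -/
def pxGraph (t s : ℕ) : SimpleGraph (ZMod t × (ZMod s → ZMod 2)) :=
  SimpleGraph.fromRel (fun x y =>
    y.1 = x.1 + 1 ∧ ∀ j : ZMod s, j ≠ -1 → y.2 j = x.2 (j + 1))

namespace Stmt11

/-- high bit of an element of `ZMod 4` -/
def star4 (a : ZMod 4) : ZMod 2 := ((a.val / 2 : ℕ) : ZMod 2)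

/-- parity (low bit) of an element of `ZMod 4` -/
def par4 (a : ZMod 4) : ZMod 2 := ((a.val : ℕ) : ZMod 2)

lemma par4_add (a b : ZMod 4) : par4 (a + b) = par4 a + par4 b := by revert a b; decide
lemma par4_sub (a b : ZMod 4) : par4 (a - b) = par4 a - par4 b := by revert a b; decide
lemma eq_of_star_par {a b : ZMod 4} (h1 : star4 a = star4 b) (h2 : par4 a = par4 b) : a = b := by
  revert a b; decide
lemma pm_of_par {e : ZMod 4} (h : par4 e = 1) : e = 1 ∨ e = -1 := by revert e; decide
lemma even_of_par {e : ZMod 4} (h : par4 e = 0) : e = 0 ∨ e = 2 := by revert e; decide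
lemma par4_one : par4 1 = 1 := by decide
lemma par4_neg_one : par4 (-1) = 1 := by decide

/-- reconstruct an element of `ZMod 4` from its parity and high bit -/
def gg (p q : ZMod 2) : ZMod 4 := ((p.val + 2 * q.val : ℕ) : ZMod 4)

lemma par4_gg (p q : ZMod 2) : par4 (gg p q) = p := by revert p q; decide
lemma star4_gg (p q : ZMod 2) : star4 (gg p q) = q := by revert p q; decide

/-- the level map -/
def L (m s : ℕ) (i : ZMod (m * s)) : ZMod s := ZMod.castHom (dvd_mul_left s m) (ZMod s) i

/-- the parity pattern forced at level `i` -/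
def fpat (m s : ℕ) (i : ZMod (m * s)) (j : ZMod s) : ZMod 2 :=
  ((i.val / s : ℕ) : ZMod 2) + (if j.val < i.val % s then 1 else 0)

variable {m s : ℕ}

lemma L_val [NeZero (m * s)] (i : ZMod (m * s)) : (L m s i).val = i.val % s := by
  rw [L, ZMod.castHom_apply, ← ZMod.natCast_val, ZMod.val_natCast]

lemma L_succ (i : ZMod (m * s)) : L m s (i + 1) = L m s i + 1 := by
  simp [L, map_add, map_one]

lemma fpat_succ (hm : 0 < m) (hme : Even m) (hs : 2 ≤ s) [NeZero (m * s)] [NeZero s]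
    (i : ZMod (m * s)) (j : ZMod s) :
    fpat m s (i + 1) j = fpat m s i j + (if j = L m s i then 1 else 0) := by
  haveI : Fact (1 < m * s) := ⟨by nlinarith⟩
  have hjs : j.val < s := ZMod.val_lt j
  have hlt : i.val < m * s := ZMod.val_lt i
  have hvadd : (i + 1).val = (i.val + 1) % (m * s) := by
    rw [ZMod.val_add, ZMod.val_one]
  have hjL : (j = L m s i) ↔ j.val = i.val % s := by
    rw [← L_val i]
    exact ⟨fun h => h ▸ rfl, fun h => ZMod.val_injective s h⟩
  set N := i.val with hNdef
  set q := N / s with hq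
  set l := N % s with hl
  have hN : N = s * q + l := (Nat.div_add_mod N s).symm
  have hls : l < s := Nat.mod_lt _ (by omega)
  have hqm : q < m := by nlinarith
  have hs0 : 0 < s := by omega
  by_cases hA : l + 1 < s
  · have hlt1 : N + 1 < m * s := by nlinarith
    have h1 : (N + 1) % (m * s) = N + 1 := Nat.mod_eq_of_lt hlt1
    have h2 : (N + 1) / s = q := by
      rw [show N + 1 = s * q + (l + 1) from by omega, Nat.mul_add_div hs0,
        Nat.div_eq_of_lt hA, Nat.add_zero]
    have h3 : (N + 1) % s = l + 1 := by
      rw [show N + 1 = s * q + (l + 1) from by omega, Nat.mul_add_mod, Nat.mod_eq_of_lt hA]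
    simp only [fpat, hvadd, h1, h2, h3, hjL, ← hNdef, ← hq, ← hl]
    split_ifs <;> first | ring1 | (exfalso; omega)
  · have hlseq : l + 1 = s := by omega
    have hmul : s * (q + 1) = s * q + s := by rw [Nat.mul_add, Nat.mul_one]
    by_cases hD : N + 1 < m * s
    · have h1 : (N + 1) % (m * s) = N + 1 := Nat.mod_eq_of_lt hD
      have h2 : (N + 1) / s = q + 1 := by
        rw [show N + 1 = s * (q + 1) from by omega, Nat.mul_div_cancel_left _ hs0]
      have h3 : (N + 1) % s = 0 := by
        rw [show N + 1 = s * (q + 1) from by omega, Nat.mul_mod_right]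
      simp only [fpat, hvadd, h1, h2, h3, hjL, ← hNdef, ← hq, ← hl]
      push_cast
      split_ifs <;> first | ring1 | (exfalso; omega)
    · have hNe : N + 1 = m * s := by omega
      have hNe' : N + 1 = s * m := by rw [Nat.mul_comm s m]; omega
      have h1 : (N + 1) % (m * s) = 0 := by rw [hNe, Nat.mod_self]
      have hqm1 : q + 1 = m := by
        have h5 : s * (q + 1) = s * m := by omega
        exact Nat.eq_of_mul_eq_mul_left hs0 h5
      obtain ⟨k, hk⟩ := hme
      have hk1 : 1 ≤ k := by omega
      have hq1 : ((q : ℕ) : ZMod 2) = 1 := by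
        rw [show q = 2 * (k - 1) + 1 from by omega]
        push_cast
        rw [show (2 : ZMod 2) = 0 from by decide]; ring
      simp only [fpat, hvadd, h1, hjL, ← hNdef, ← hq, ← hl, Nat.zero_div, Nat.zero_mod,
        Nat.cast_zero, Nat.not_lt_zero, if_false, add_zero, zero_add, hq1]
      split_ifs <;> first | decide | (exfalso; omega)

/-- the forward relation of the graph `cpmBar m s 4 1` -/
def rel (m s : ℕ) (x y : ZMod (m * s) × (ZMod s → ZMod 4)) : Prop :=
  ∃ ε : ZMod 4, (ε = 1 ∨ ε = -1) ∧ y.1 = x.1 + 1 ∧ y.2 = x.2 + Pi.single (L m s x.1) ε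

/-- the parity-pattern set -/
def S (m s : ℕ) : Set (ZMod (m * s) × (ZMod s → ZMod 4)) :=
  {x | ∀ j, par4 (x.2 j) = fpat m s x.1 j}

lemma cpm_adj (x y : ZMod (m * s) × (ZMod s → ZMod 4)) :
    (cpmBar m s 4 1).Adj x y ↔ x ≠ y ∧ (rel m s x y ∨ rel m s y x) := by
  simp only [cpmBar, SimpleGraph.fromRel_adj, rel, L, one_pow, mul_one]

lemma rel_ne [Fact (1 < m * s)] {x y : ZMod (m * s) × (ZMod s → ZMod 4)}
    (h : rel m s x y) : x ≠ y := by
  obtain ⟨ε, hε, h1, h2⟩ := h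
  intro hxy
  rw [hxy] at h1
  exact one_ne_zero (left_eq_add.mp h1)

lemma adj_of_rel [Fact (1 < m * s)] {x y : ZMod (m * s) × (ZMod s → ZMod 4)}
    (h : rel m s x y) : (cpmBar m s 4 1).Adj x y :=
  (cpm_adj x y).mpr ⟨rel_ne h, Or.inl h⟩

lemma rel_S (hm : 0 < m) (hme : Even m) (hs : 2 ≤ s) [NeZero (m * s)] [NeZero s]
    {x y : ZMod (m * s) × (ZMod s → ZMod 4)} (h : rel m s x y) :
    x ∈ S m s ↔ y ∈ S m s := by
  obtain ⟨ε, hε, h1, h2⟩ := h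
  have key : ∀ j, (par4 (y.2 j) = fpat m s y.1 j) ↔ (par4 (x.2 j) = fpat m s x.1 j) := by
    intro j
    rw [h1, h2, fpat_succ hm hme hs, Pi.add_apply, par4_add, Pi.single_apply]
    have hp : par4 (if j = L m s x.1 then ε else 0) = if j = L m s x.1 then 1 else 0 := by
      split_ifs
      · rcases hε with rfl | rfl
        · exact par4_one
        · exact par4_neg_one
      · rfl
    rw [hp]
    exact add_left_inj _
  exact (forall_congr' key).symm

lemma adj_S (hm : 0 < m) (hme : Even m) (hs : 2 ≤ s) [NeZero (m * s)] [NeZero s]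
    {x y : ZMod (m * s) × (ZMod s → ZMod 4)} (h : (cpmBar m s 4 1).Adj x y) :
    x ∈ S m s ↔ y ∈ S m s := by
  rcases ((cpm_adj x y).mp h).2 with hr | hr
  · exact rel_S hm hme hs hr
  · exact (rel_S hm hme hs hr).symm

lemma reach_S (hm : 0 < m) (hme : Even m) (hs : 2 ≤ s) [NeZero (m * s)] [NeZero s]
    {x y : ZMod (m * s) × (ZMod s → ZMod 4)} (h : (cpmBar m s 4 1).Reachable x y) :
    x ∈ S m s ↔ y ∈ S m s := by
  obtain ⟨w⟩ := h
  induction w with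
  | nil => exact Iff.rfl
  | cons hadj _ ih => exact (adj_S hm hme hs hadj).trans ih

lemma zero_mem_S [NeZero (m * s)] :
    ((0 : ZMod (m * s)), (0 : ZMod s → ZMod 4)) ∈ S m s := by
  intro j
  simp [S, par4, fpat, ZMod.val_zero, Nat.zero_div, Nat.zero_mod]

lemma reach_two [Fact (1 < m * s)] (i : ZMod (m * s)) (v : ZMod s → ZMod 4) :
    (cpmBar m s 4 1).Reachable (i, v) (i, v + Pi.single (L m s i) 2) := by
  have e1 : rel m s (i, v) (i + 1, v + Pi.single (L m s i) 1) := ⟨1, Or.inl rfl, rfl, rfl⟩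
  have e2 : rel m s (i, v + Pi.single (L m s i) 2) (i + 1, v + Pi.single (L m s i) 1) :=
    ⟨-1, Or.inr rfl, rfl, by
      rw [add_assoc, ← Pi.single_add, show (2 : ZMod 4) + (-1) = 1 from by decide]⟩
  exact (adj_of_rel e1).reachable.trans (adj_of_rel e2).reachable.symm

lemma reach_shift [Fact (1 < m * s)] (t : ℕ) :
    ∀ (i : ZMod (m * s)) (v : ZMod s → ZMod 4),
      (cpmBar m s 4 1).Reachable (i, v) (i, v + Pi.single (L m s i + (t : ZMod s)) 2) := by
  induction t with
  | zero =>
    intro i v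
    simpa using reach_two i v
  | succ t ih =>
    intro i v
    have h1 : rel m s (i, v) (i + 1, v + Pi.single (L m s i) 1) := ⟨1, Or.inl rfl, rfl, rfl⟩
    have h2 := ih (i + 1) (v + Pi.single (L m s i) 1)
    have heq : (v + Pi.single (L m s i) 1) + Pi.single (L m s (i + 1) + (t : ZMod s)) 2 =
        (v + Pi.single (L m s i + ((t + 1 : ℕ) : ZMod s)) 2) + Pi.single (L m s i) 1 := by
      rw [L_succ, show ((t + 1 : ℕ) : ZMod s) = (t : ZMod s) + 1 from by push_cast; ring,
        show L m s i + ((t : ZMod s) + 1) = L m s i + 1 + (t : ZMod s) from by ring,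
        add_right_comm]
    have h3 : rel m s (i, v + Pi.single (L m s i + ((t + 1 : ℕ) : ZMod s)) 2)
        (i + 1, (v + Pi.single (L m s i) 1) + Pi.single (L m s (i + 1) + (t : ZMod s)) 2) :=
      ⟨1, Or.inl rfl, rfl, heq⟩
    exact (((adj_of_rel h1).reachable.trans h2).trans (adj_of_rel h3).reachable.symm)

lemma reach_single [Fact (1 < m * s)] [NeZero s] (i : ZMod (m * s)) (v : ZMod s → ZMod 4)
    (j : ZMod s) :
    (cpmBar m s 4 1).Reachable (i, v) (i, v + Pi.single j 2) := by
  have h := reach_shift ((j - L m s i).val) i v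
  rw [ZMod.natCast_val, ZMod.cast_id,
    show L m s i + (j - L m s i) = j from by ring] at h
  exact h

lemma reach_add_even [Fact (1 < m * s)] [NeZero s] (i : ZMod (m * s))
    (w : ZMod s → ZMod 4) (hw : ∀ j, w j = 0 ∨ w j = 2) (v : ZMod s → ZMod 4) :
    (cpmBar m s 4 1).Reachable (i, v) (i, v + w) := by
  have main : ∀ (F : Finset (ZMod s)) (v : ZMod s → ZMod 4),
      (cpmBar m s 4 1).Reachable (i, v) (i, v + ∑ j ∈ F, Pi.single j (w j)) := by
    intro F
    induction F using Finset.induction_on with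
    | empty => intro v; simpa using SimpleGraph.Reachable.refl _
    | @insert a F ha ih =>
      intro v
      rw [Finset.sum_insert ha,
        add_comm (Pi.single a (w a)) (∑ j ∈ F, Pi.single j (w j)), ← add_assoc]
      rcases hw a with h | h
      · rw [h, Pi.single_zero, add_zero]
        exact ih v
      · rw [h]
        exact (ih v).trans (reach_single i _ a)
  have h := main Finset.univ v
  rwa [Finset.univ_sum_single] at h

lemma reach_forward [Fact (1 < m * s)] (t : ℕ) :
    ∃ v, (cpmBar m s 4 1).Reachable ((0 : ZMod (m * s)), (0 : ZMod s → ZMod 4))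
      ((t : ZMod (m * s)), v) := by
  induction t with
  | zero => exact ⟨0, by simpa using SimpleGraph.Reachable.refl _⟩
  | succ t ih =>
    obtain ⟨v, hv⟩ := ih
    refine ⟨v + Pi.single (L m s (t : ZMod (m * s))) 1,
      hv.trans (adj_of_rel ⟨1, Or.inl rfl, by push_cast; ring, rfl⟩).reachable⟩

lemma S_reach (hm : 0 < m) (hme : Even m) (hs : 2 ≤ s) [Fact (1 < m * s)] [NeZero s]
    (x : ZMod (m * s) × (ZMod s → ZMod 4)) (hx : x ∈ S m s) :
    (cpmBar m s 4 1).Reachable x ((0 : ZMod (m * s)), (0 : ZMod s → ZMod 4)) := by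
  obtain ⟨i, u⟩ := x
  obtain ⟨v0, hv0⟩ := reach_forward (m := m) (s := s) i.val
  rw [ZMod.natCast_val, ZMod.cast_id] at hv0
  have hv0S : (i, v0) ∈ S m s := (reach_S hm hme hs hv0).mp zero_mem_S
  have hw : ∀ j, (u - v0) j = 0 ∨ (u - v0) j = 2 := fun j =>
    even_of_par (by rw [Pi.sub_apply, par4_sub, hx j, hv0S j, sub_self])
  have h := reach_add_even i (u - v0) hw v0
  rw [show v0 + (u - v0) = u from by ring] at h
  exact (hv0.trans h).symm

lemma px_adj {t : ℕ} (x y : ZMod t × (ZMod s → ZMod 2)) :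
    (pxGraph t s).Adj x y ↔ x ≠ y ∧
      (((y.1 = x.1 + 1) ∧ ∀ j : ZMod s, j ≠ -1 → y.2 j = x.2 (j + 1)) ∨
       ((x.1 = y.1 + 1) ∧ ∀ j : ZMod s, j ≠ -1 → x.2 j = y.2 (j + 1))) := by
  simp only [pxGraph, SimpleGraph.fromRel_adj]

lemma psi_rel {i : ZMod (m * s)} {v u : ZMod s → ZMod 4}
    (h : rel m s (i, v) ((i + 1 : ZMod (m * s)), u)) (j : ZMod s) (hj : j ≠ -1) :
    star4 (u (L m s (i + 1) + j)) = star4 (v (L m s i + (j + 1))) := by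
  obtain ⟨ε, hε, -, h2⟩ := h
  simp only at h2
  rw [h2, L_succ, Pi.add_apply, Pi.single_apply,
    if_neg (fun h => hj (by linear_combination (h : L m s i + 1 + j = L m s i))), add_zero,
    show L m s i + 1 + j = L m s i + (j + 1) from by ring]

lemma rel_of_psi (hm : 0 < m) (hme : Even m) (hs : 2 ≤ s) [NeZero (m * s)] [NeZero s]
    {i : ZMod (m * s)} {v u : ZMod s → ZMod 4}
    (hx : (i, v) ∈ S m s) (hy : ((i + 1 : ZMod (m * s)), u) ∈ S m s)
    (hpx : ∀ j : ZMod s, j ≠ -1 → star4 (u (L m s (i + 1) + j)) = star4 (v (L m s i + (j + 1)))) :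
    rel m s (i, v) ((i + 1 : ZMod (m * s)), u) := by
  have hpar : ∀ k, par4 (u k) = par4 (v k) + (if k = L m s i then 1 else 0) := by
    intro k
    rw [hy k, fpat_succ hm hme hs, ← hx k]
  refine ⟨u (L m s i) - v (L m s i), ?_, rfl, ?_⟩
  · apply pm_of_par
    rw [par4_sub, hpar (L m s i), if_pos rfl]
    ring
  · funext k
    simp only [Pi.add_apply, Pi.single_apply]
    by_cases hk : k = L m s i
    · rw [if_pos hk, hk]
      ring
    · rw [if_neg hk, add_zero]
      have hj := hpx (k - L m s i - 1)
        (fun h => hk (by linear_combination (h : k - L m s i - 1 = -1)))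
      rw [L_succ, show L m s i + 1 + (k - L m s i - 1) = k from by ring,
        show L m s i + (k - L m s i - 1 + 1) = k from by ring] at hj
      exact eq_of_star_par hj (by rw [hpar k, if_neg hk, add_zero])

end Stmt11

/-- for m even, s ≥ 2, the map Psi sending <i;(v_0,...,v_{s-1})> to
(i, (v_l*, v_{l+1}*, ..., v_{l-1}*)) with l ≡ i (mod s), where 0* = 1* = 0 and 2* = 3* = 1,
is a graph isomorphism from the connected component CPM(m,s,4;1) of CPMbar(m,s,4;1)
containing <0;0> onto the Praeger-Xu graph PX(ms,s). -/
theorem stmt11 (m s : ℕ) (hm : 0 < m) (hme : Even m) (hs : 2 ≤ s) :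
    let G := cpmBar m s 4 1
    let C : Set (ZMod (m * s) × (ZMod s → ZMod 4)) :=
      {x | G.Reachable x ((0 : ZMod (m * s)), (0 : ZMod s → ZMod 4))}
    let star : ZMod 4 → ZMod 2 := fun a => ((a.val / 2 : ℕ) : ZMod 2)
    let Ψ : C → ZMod (m * s) × (ZMod s → ZMod 2) :=
      fun x => (x.val.1, fun j =>
        star (x.val.2 (ZMod.castHom (dvd_mul_left s m) (ZMod s) x.val.1 + j)))
    Function.Bijective Ψ ∧
      ∀ a b : C, (SimpleGraph.induce C G).Adj a b ↔ (pxGraph (m * s) s).Adj (Ψ a) (Ψ b) := by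
  intro G C star Ψ
  have hm2 : 2 ≤ m := by obtain ⟨k, hk⟩ := hme; omega
  haveI : Fact (1 < m * s) := ⟨by nlinarith⟩
  haveI : NeZero (m * s) := ⟨Nat.mul_ne_zero (by omega) (by omega)⟩
  haveI : NeZero s := ⟨by omega⟩
  have hC : ∀ x, x ∈ C ↔ x ∈ Stmt11.S m s := by
    intro x
    constructor
    · intro h; exact (Stmt11.reach_S hm hme hs h).mpr Stmt11.zero_mem_S
    · intro h; exact Stmt11.S_reach hm hme hs x h
  refine ⟨⟨?_, ?_⟩, ?_⟩
  · -- injective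
    rintro ⟨⟨i1, u1⟩, ha⟩ ⟨⟨i2, u2⟩, hb⟩ hab
    have h1 : i1 = i2 := congrArg Prod.fst hab
    subst h1
    have h2 : ∀ j, Stmt11.star4 (u1 (Stmt11.L m s i1 + j)) =
        Stmt11.star4 (u2 (Stmt11.L m s i1 + j)) :=
      fun j => congrFun (congrArg Prod.snd hab) j
    have hsa := (hC _).mp ha
    have hsb := (hC _).mp hb
    apply Subtype.ext
    show (i1, u1) = (i1, u2)
    refine Prod.ext rfl ?_
    funext k
    have h3 := h2 (k - Stmt11.L m s i1)
    rw [show Stmt11.L m s i1 + (k - Stmt11.L m s i1) = k from by ring] at h3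
    exact Stmt11.eq_of_star_par h3 ((hsa k).trans (hsb k).symm)
  · -- surjective
    rintro ⟨i, w⟩
    refine ⟨⟨(i, fun k => Stmt11.gg (Stmt11.fpat m s i k) (w (k - Stmt11.L m s i))), ?_⟩, ?_⟩
    · exact (hC _).mpr (fun j => by rw [Stmt11.par4_gg])
    · refine Prod.ext ?_ ?_
      · rfl
      funext j
      show Stmt11.star4
        (Stmt11.gg (Stmt11.fpat m s i (Stmt11.L m s i + j))
          (w (Stmt11.L m s i + j - Stmt11.L m s i))) = w j
      rw [show Stmt11.L m s i + j - Stmt11.L m s i = j from by ring, Stmt11.star4_gg]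
  · -- adjacency
    rintro ⟨⟨ia, va⟩, ha⟩ ⟨⟨ib, vb⟩, hb⟩
    have hsa := (hC _).mp ha
    have hsb := (hC _).mp hb
    constructor
    · intro hadj
      have hadj' : (cpmBar m s 4 1).Adj (ia, va) (ib, vb) := hadj
      rcases ((Stmt11.cpm_adj _ _).mp hadj').2 with hr | hr
      · obtain ⟨ε, hε, h1, h2⟩ := hr
        have h1' : ib = ia + 1 := h1
        subst h1'
        refine (Stmt11.px_adj _ _).mpr ⟨?_, Or.inl ⟨rfl, ?_⟩⟩
        · intro h
          have h' : ia = ia + 1 := congrArg Prod.fst h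
          exact one_ne_zero (left_eq_add.mp h')
        · exact fun j hj => Stmt11.psi_rel ⟨ε, hε, rfl, h2⟩ j hj
      · obtain ⟨ε, hε, h1, h2⟩ := hr
        have h1' : ia = ib + 1 := h1
        subst h1'
        refine (Stmt11.px_adj _ _).mpr ⟨?_, Or.inr ⟨rfl, ?_⟩⟩
        · intro h
          have h' : ib + 1 = ib := congrArg Prod.fst h
          exact one_ne_zero (left_eq_add.mp h'.symm)
        · exact fun j hj => Stmt11.psi_rel ⟨ε, hε, rfl, h2⟩ j hj
    · intro hpadj
      rcases ((Stmt11.px_adj _ _).mp hpadj).2 with ⟨h1, hr⟩ | ⟨h1, hr⟩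
      · have h1' : ib = ia + 1 := h1
        subst h1'
        have hrel := Stmt11.rel_of_psi hm hme hs hsa hsb (fun j hj => hr j hj)
        exact (Stmt11.adj_of_rel hrel : (cpmBar m s 4 1).Adj _ _)
      · have h1' : ia = ib + 1 := h1
        subst h1'
        have hrel := Stmt11.rel_of_psi hm hme hs hsb hsa (fun j hj => hr j hj)
        exact ((Stmt11.adj_of_rel hrel).symm : (cpmBar m s 4 1).Adj _ _)
end

section
/- Let m, s, n be positive integers with n ≥ 3, s ≥ 2, ms ≥ 3, n ≠ 4, and let r be a unit of Z_n with r^(ms) = ±1. Then in the graph CPMbar(m,s,n;r), every cycle contains, for each label ℓ ∈ {0,…,s-1}, either zero or at least two edges of label ℓ; moreover, if it contains exactly two edges of label ℓ, these two edges are not consecutive on the cycle. -/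
private lemma support_getElem_eq {V : Type*} {G : SimpleGraph V} {u v : V}
    (p : G.Walk u v) (i : ℕ) (h : i < p.support.length) :
    p.support[i] = p.getVert i := by
  induction p generalizing i with
  | nil =>
    simp only [SimpleGraph.Walk.support_nil, List.length_singleton] at h
    interval_cases i
    simp [SimpleGraph.Walk.getVert]
  | cons ha q ih =>
    cases i with
    | zero => simp [SimpleGraph.Walk.getVert]
    | succ i =>
      simp only [SimpleGraph.Walk.support_cons, List.length_cons] at h
      simpa [SimpleGraph.Walk.getVert_cons_succ] using ih i (by omega)

private lemma cycle_getVert_inj {V : Type*} {G : SimpleGraph V} {u : V} {p : G.Walk u u}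
    (hp : p.IsCycle) {i j : ℕ} (hi1 : 1 ≤ i) (hiL : i ≤ p.length)
    (hj1 : 1 ≤ j) (hjL : j ≤ p.length) (hij : i ≠ j) :
    p.getVert i ≠ p.getVert j := by
  have hnd := hp.support_nodup
  have hlen : p.support.length = p.length + 1 := p.length_support
  have htl : p.support.tail.length = p.length := by
    simp [List.length_tail, hlen]
  intro h
  apply hij
  have hi' : i - 1 < p.support.tail.length := by omega
  have hj' : j - 1 < p.support.tail.length := by omega
  have e1 : p.support.tail[i-1]'hi' = p.getVert i := by
    rw [List.getElem_tail, support_getElem_eq]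
    congr 1; omega
  have e2 : p.support.tail[j-1]'hj' = p.getVert j := by
    rw [List.getElem_tail, support_getElem_eq]
    congr 1; omega
  have := (hnd.getElem_inj_iff).mp (e1.trans (h.trans e2.symm))
  omega

private lemma one_ne_zero'' {N : ℕ} (h : 2 ≤ N) : (1 : ZMod N) ≠ 0 := by
  haveI : Fact (1 < N) := ⟨h⟩
  exact one_ne_zero

private lemma edge_data {m s n : ℕ} (hms : 3 ≤ m * s) {r : ZMod n}
    {x y : ZMod (m * s) × (ZMod s → ZMod n)} (h : (cpmBar m s n r).Adj x y) :
    ∃ (j : ZMod (m * s)) (ε : ZMod n), (ε = 1 ∨ ε = -1) ∧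
      (if y.1 = x.1 + 1 then ZMod.castHom (dvd_mul_left s m) (ZMod s) x.1
        else ZMod.castHom (dvd_mul_left s m) (ZMod s) y.1) =
        ZMod.castHom (dvd_mul_left s m) (ZMod s) j ∧
      ((x.1 = j ∧ y.1 = j + 1 ∧
          y.2 = x.2 + Pi.single (ZMod.castHom (dvd_mul_left s m) (ZMod s) j) (ε * r ^ j.val)) ∨
       (y.1 = j ∧ x.1 = j + 1 ∧
          x.2 = y.2 + Pi.single (ZMod.castHom (dvd_mul_left s m) (ZMod s) j) (ε * r ^ j.val))) := by
  rw [cpmBar, SimpleGraph.fromRel_adj] at h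
  obtain ⟨-, h | h⟩ := h
  · obtain ⟨ε, hε, h1, h2⟩ := h
    exact ⟨x.1, ε, hε, by rw [if_pos h1], Or.inl ⟨rfl, h1, h2⟩⟩
  · obtain ⟨ε, hε, h1, h2⟩ := h
    refine ⟨y.1, ε, hε, ?_, Or.inr ⟨rfl, h1, h2⟩⟩
    rw [if_neg]
    intro hcon
    have h3 : x.1 = x.1 + 2 := by
      calc x.1 = y.1 + 1 := h1
      _ = x.1 + 1 + 1 := by rw [hcon]
      _ = x.1 + 2 := by ring
    have h4 : (2 : ZMod (m * s)) = 0 := (left_eq_add.mp h3)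
    have h5 : ((2 : ℕ) : ZMod (m * s)) = 0 := by exact_mod_cast h4
    have h6 : m * s ∣ 2 := (ZMod.natCast_eq_zero_iff 2 (m * s)).mp h5
    have := Nat.le_of_dvd (by norm_num) h6
    omega

/-- every cycle of CPMbar(m,s,n;r) contains, for each label l, either zero or at
least two edges of label l, and if exactly two, they are not consecutive on the cycle. -/
theorem stmt12 (m s n : ℕ) (hm : 0 < m) (hs : 2 ≤ s) (hn : 3 ≤ n) (hn4 : n ≠ 4)
    (hms : 3 ≤ m * s) (r : ZMod n) (hu : IsUnit r)
    (hr : r ^ (m * s) = 1 ∨ r ^ (m * s) = -1)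
    (a : ZMod (m * s) × (ZMod s → ZMod n)) (w : (cpmBar m s n r).Walk a a)
    (hw : w.IsCycle) (ℓ : ZMod s) :
    let lab : ZMod (m * s) × (ZMod s → ZMod n) → ZMod (m * s) × (ZMod s → ZMod n) → ZMod s :=
      fun x y => if y.1 = x.1 + 1 then ZMod.castHom (dvd_mul_left s m) (ZMod s) x.1
        else ZMod.castHom (dvd_mul_left s m) (ZMod s) y.1
    let S : Finset (Fin w.length) := Finset.univ.filter
      (fun k => lab (w.getVert k.val) (w.getVert (k.val + 1)) = ℓ)
    (S.card = 0 ∨ 2 ≤ S.card) ∧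
      (S.card = 2 → ∀ k : Fin w.length, ¬(k ∈ S ∧ (⟨(k.val + 1) % w.length, Nat.mod_lt _ k.pos⟩ : Fin w.length) ∈ S)) := by
  intro lab S
  haveI : Fact (1 < n) := ⟨by omega⟩
  have hL3 : 3 ≤ w.length := hw.three_le_length
  set F : ℕ → ZMod n := fun k => (w.getVert k).2 ℓ with hF
  have hmemS : ∀ k : Fin w.length,
      k ∈ S ↔ lab (w.getVert k.val) (w.getVert (k.val + 1)) = ℓ := by
    intro k
    simp [S, Finset.mem_filter]
  -- telescoping sum
  have htel : ∑ k : Fin w.length, (F (k.val + 1) - F k.val) = 0 := by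
    have h1 := Fin.sum_univ_eq_sum_range (fun i => F (i + 1) - F i) w.length
    rw [Finset.sum_range_sub F w.length] at h1
    rw [h1]
    simp [hF, SimpleGraph.Walk.getVert_length]
  -- edges not labelled ℓ contribute zero
  have hzero : ∀ k : Fin w.length, k ∉ S → F (k.val + 1) - F k.val = 0 := by
    intro k hk
    rw [hmemS] at hk
    obtain ⟨j, ε, hε, hlabj, hd⟩ := edge_data hms (w.adj_getVert_succ k.isLt)
    have hne : ZMod.castHom (dvd_mul_left s m) (ZMod s) j ≠ ℓ := by
      intro hcc
      exact hk ((hlabj.trans hcc :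
        lab (w.getVert k.val) (w.getVert (k.val + 1)) = ℓ))
    rw [ZMod.castHom_apply] at hne
    rcases hd with ⟨h0, h1, h2⟩ | ⟨h0, h1, h2⟩ <;>
      simp [hF, h2, Pi.single_eq_of_ne (Ne.symm hne)]
  have hsumS : ∑ k ∈ S, (F (k.val + 1) - F k.val) = 0 := by
    rw [← htel]
    exact (Finset.sum_subset (Finset.subset_univ S) (fun k _ hk => hzero k hk))
  -- edges labelled ℓ contribute a unit
  have hunit : ∀ k : Fin w.length, k ∈ S → IsUnit (F (k.val + 1) - F k.val) := by
    intro k hk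
    rw [hmemS] at hk
    obtain ⟨j, ε, hε, hlabj, hd⟩ := edge_data hms (w.adj_getVert_succ k.isLt)
    have hcj : ZMod.castHom (dvd_mul_left s m) (ZMod s) j = ℓ := hlabj.symm.trans hk
    have hεu : IsUnit ε := by
      rcases hε with rfl | rfl
      · exact isUnit_one
      · exact isUnit_one.neg
    have hRu : IsUnit (ε * r ^ j.val) := hεu.mul (hu.pow _)
    rw [hcj] at hd
    rcases hd with ⟨h0, h1, h2⟩ | ⟨h0, h1, h2⟩
    · have he : F (k.val + 1) - F k.val = ε * r ^ j.val := by
        simp [hF, h2]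
      rw [he]; exact hRu
    · have he : F (k.val + 1) - F k.val = -(ε * r ^ j.val) := by
        simp [hF, h2]
      rw [he]; exact hRu.neg
  have hcard1 : S.card ≠ 1 := by
    intro h1
    obtain ⟨k, hkS⟩ := Finset.card_eq_one.mp h1
    rw [hkS, Finset.sum_singleton] at hsumS
    exact (hunit k (by rw [hkS]; exact Finset.mem_singleton_self k)).ne_zero hsumS
  refine ⟨by omega, ?_⟩
  rintro hcard2 k ⟨hk1, hk2⟩
  set k' : Fin w.length := ⟨(k.val + 1) % w.length, Nat.mod_lt _ k.pos⟩ with hk'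
  have hkL := k.isLt
  have hcases : (k.val + 1 < w.length ∧ k'.val = k.val + 1) ∨
      (k.val + 1 = w.length ∧ k'.val = 0) := by
    rcases Nat.lt_or_ge (k.val + 1) w.length with h | h
    · exact Or.inl ⟨h, Nat.mod_eq_of_lt h⟩
    · have he : k.val + 1 = w.length := by omega
      refine Or.inr ⟨he, ?_⟩
      show (k.val + 1) % w.length = 0
      rw [he, Nat.mod_self]
  have hkk' : k ≠ k' := by
    intro he
    have hv : k.val = k'.val := congrArg Fin.val he
    rcases hcases with ⟨h, ht⟩ | ⟨h, ht⟩ <;> omega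
  -- the middle vertex
  have hmid : w.getVert k'.val = w.getVert (k.val + 1) := by
    rcases hcases with ⟨h, ht⟩ | ⟨h, ht⟩
    · rw [ht]
    · rw [ht, h, SimpleGraph.Walk.getVert_zero, SimpleGraph.Walk.getVert_length]
  -- first and last vertices are distinct
  have hxz : w.getVert k.val ≠ w.getVert (k'.val + 1) := by
    have h1 : w.getVert k.val = w.getVert (if k.val = 0 then w.length else k.val) := by
      by_cases h0 : k.val = 0
      · rw [if_pos h0, h0, SimpleGraph.Walk.getVert_zero, SimpleGraph.Walk.getVert_length]
      · rw [if_neg h0]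
    rw [h1]
    refine cycle_getVert_inj hw ?_ ?_ ?_ ?_ ?_
    · split <;> omega
    · split <;> omega
    · omega
    · rcases hcases with ⟨h, ht⟩ | ⟨h, ht⟩ <;> omega
    · rcases hcases with ⟨h, ht⟩ | ⟨h, ht⟩ <;> split <;> omega
  have hSpair : S = {k, k'} := by
    refine (Finset.eq_of_subset_of_card_le ?_ ?_).symm
    · intro x hx
      rcases Finset.mem_insert.mp hx with rfl | hx
      · exact hk1
      · rw [Finset.mem_singleton.mp hx]; exact hk2
    · rw [Finset.card_pair hkk', hcard2]
  rw [hSpair, Finset.sum_pair hkk'] at hsumS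
  have hFt : F k'.val = F (k.val + 1) := by simp [hF, hmid]
  -- edge data for both edges
  obtain ⟨j1, ε1, hε1, hlab1, hd1⟩ := edge_data hms (w.adj_getVert_succ k.isLt)
  obtain ⟨j2, ε2, hε2, hlab2, hd2⟩ := edge_data hms (w.adj_getVert_succ k'.isLt)
  have hcj1 : ZMod.castHom (dvd_mul_left s m) (ZMod s) j1 = ℓ :=
    hlab1.symm.trans ((hmemS k).mp hk1)
  have hcj2 : ZMod.castHom (dvd_mul_left s m) (ZMod s) j2 = ℓ :=
    hlab2.symm.trans ((hmemS k').mp hk2)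
  rw [hmid] at hd2
  have h1s : (1 : ZMod s) ≠ 0 := one_ne_zero'' hs
  have h1ms : (1 : ZMod (m * s)) ≠ 0 := one_ne_zero'' (by omega)
  -- the two edges have the same base level j
  have hjj : j1 = j2 := by
    rcases hd1 with ⟨-, hy1, -⟩ | ⟨hy1, -, -⟩ <;> rcases hd2 with ⟨hy2, -, -⟩ | ⟨-, hy2, -⟩
    · exfalso
      have hj : j2 = j1 + 1 := hy2.symm.trans hy1
      have hx : ℓ = ℓ + 1 := by
        conv_lhs => rw [← hcj2]
        rw [hj, map_add, map_one, hcj1]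
      exact h1s (left_eq_add.mp hx)
    · exact add_right_cancel (hy1.symm.trans hy2)
    · exact hy1.symm.trans hy2
    · exfalso
      have hj : j1 = j2 + 1 := hy1.symm.trans hy2
      have hx : ℓ = ℓ + 1 := by
        conv_lhs => rw [← hcj1]
        rw [hj, map_add, map_one, hcj2]
      exact h1s (left_eq_add.mp hx)
  subst hjj
  rw [hcj1] at hd1 hd2
  rcases hd1 with ⟨hx1, hy1, h2⟩ | ⟨hy1, hx1, h2⟩ <;>
    rcases hd2 with ⟨hy2, hz1, h2'⟩ | ⟨hz1, hy2, h2'⟩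
  · -- up then up: impossible since y.1 = j1+1 = j1
    exfalso
    exact h1ms (left_eq_add.mp (hy2.symm.trans hy1))
  · -- up then down
    have hF1 : F (k.val + 1) = F k.val + ε1 * r ^ j1.val := by simp [hF, h2]
    have hF2 : F (k.val + 1) = F (k'.val + 1) + ε2 * r ^ j1.val := by simp [hF, h2']
    have key : ε1 * r ^ j1.val = ε2 * r ^ j1.val := by
      have hh := hsumS
      rw [hF1, hFt, hF2] at hh
      linear_combination hh
    have hεeq : ε1 = ε2 := (hu.pow j1.val).mul_right_cancel key
    apply hxz
    refine Prod.ext (hx1.trans hz1.symm) ?_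
    have := h2.symm.trans h2'
    rw [hεeq] at this
    exact add_right_cancel this
  · -- down then up
    have hF1 : F k.val = F (k.val + 1) + ε1 * r ^ j1.val := by simp [hF, h2]
    have hF2 : F (k'.val + 1) = F (k.val + 1) + ε2 * r ^ j1.val := by simp [hF, h2']
    have key : ε1 * r ^ j1.val = ε2 * r ^ j1.val := by
      have hh := hsumS
      rw [hF1, hFt, hF2] at hh
      linear_combination -hh
    have hεeq : ε1 = ε2 := (hu.pow j1.val).mul_right_cancel key
    apply hxz
    refine Prod.ext (hx1.trans hz1.symm) ?_
    rw [hεeq] at h2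
    exact h2.trans h2'.symm
  · -- down then down: impossible
    exfalso
    exact h1ms (left_eq_add.mp (hy1.symm.trans hy2))
end

section
/- Let m, s, n be positive integers with n ≥ 3 and let r be a unit of Z_n with r^(ms) = ±1. If n is odd, then the graph CPMbar(m,s,n;r) is connected. -/
namespace SimpleGraph

variable {V β : Type*} [AddGroup β]

def reachableShifts (G : SimpleGraph V) (f : β → V) : AddSubgroup β where
  carrier := {δ | ∀ b, G.Reachable (f b) (f (b + δ))}
  zero_mem' b := by simp
  add_mem' {δ δ'} hδ hδ' b := (hδ b).trans (by simpa [add_assoc] using hδ' (b + δ))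
  neg_mem' {δ} hδ b := (by simpa using hδ (b + -δ) : G.Reachable _ _).symm

end SimpleGraph

open SimpleGraph

namespace CpmBar

variable {m s n : ℕ} {r : ZMod n}

local notation "col" => ZMod.castHom (dvd_mul_left s m) (ZMod s)

theorem adj_add_single [Nontrivial (ZMod n)] (hr : IsUnit r) (i : ZMod (m * s))
    (v : ZMod s → ZMod n) {ε : ZMod n} (hε : ε = 1 ∨ ε = -1) :
    (cpmBar m s n r).Adj (i, v) (i + 1, v + Pi.single (col i) (ε * r ^ i.val)) := by
  refine (fromRel_adj _ _ _).2 ⟨fun h => ?_, Or.inl ⟨ε, hε, rfl, rfl⟩⟩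
  have hεu : IsUnit ε := by rcases hε with rfl | rfl <;> simp
  have hsingle : Pi.single (col i) (ε * r ^ i.val) = (0 : ZMod s → ZMod n) :=
    left_eq_add.1 (congrArg Prod.snd h)
  exact (hεu.mul (hr.pow _)).ne_zero (by simpa using congrFun hsingle (col i))

theorem single_two_mul_mem_reachableShifts [Nontrivial (ZMod n)] (hr : IsUnit r)
    (i : ZMod (m * s)) :
    Pi.single (col i) (2 * r ^ i.val) ∈ (cpmBar m s n r).reachableShifts (Prod.mk i) := by
  intro v
  have hup := adj_add_single hr i v (ε := 1) (Or.inl rfl)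
  have hdown := adj_add_single hr i (v + Pi.single (col i) (2 * r ^ i.val))
    (ε := -1) (Or.inr rfl)
  rw [add_assoc, ← Pi.single_add, show 2 * r ^ i.val + -1 * r ^ i.val = 1 * r ^ i.val by ring]
    at hdown
  exact hup.reachable.trans hdown.symm.reachable

theorem single_mem_reachableShifts_col [Nontrivial (ZMod n)] (h2 : IsUnit (2 : ZMod n))
    (hr : IsUnit r) (i : ZMod (m * s)) (c : ZMod n) :
    Pi.single (col i) c ∈ (cpmBar m s n r).reachableShifts (Prod.mk i) := by
  obtain ⟨u, hu⟩ := h2.mul (hr.pow i.val)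
  have hc : c = (ZMod.cast (((u⁻¹ : (ZMod n)ˣ) : ZMod n) * c) : ℤ) • (2 * r ^ i.val) := by
    rw [zsmul_eq_mul, ZMod.intCast_zmod_cast, ← hu, mul_comm, ← mul_assoc, Units.mul_inv,
      one_mul]
  rw [hc, ← AddMonoidHom.single_apply, map_zsmul]
  exact AddSubgroup.zsmul_mem _ (single_two_mul_mem_reachableShifts hr i) _

theorem single_mem_reachableShifts_of_col_add_eq [Nontrivial (ZMod n)] (h2 : IsUnit (2 : ZMod n))
    (hr : IsUnit r) (k : ℕ) :
    ∀ (i : ZMod (m * s)) (ℓ : ZMod s), col (i + k) = ℓ → ∀ c : ZMod n,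
      Pi.single ℓ c ∈ (cpmBar m s n r).reachableShifts (Prod.mk i) := by
  induction k with
  | zero =>
    rintro i ℓ rfl c
    simpa using single_mem_reachableShifts_col h2 hr i c
  | succ k ih =>
    rintro i ℓ rfl c v
    have hℓ : col (i + 1 + k) = col (i + (k + 1 : ℕ)) := by push_cast; ring_nf
    set δ : ZMod s → ZMod n := Pi.single (col i) (1 * r ^ i.val)
    have hup := adj_add_single hr i v (ε := 1) (Or.inl rfl)
    have hdown := adj_add_single hr i (v + Pi.single (col (i + (k + 1 : ℕ))) c)
      (ε := 1) (Or.inl rfl)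
    have hshift := ih (i + 1) _ hℓ c (v + δ)
    rw [add_right_comm] at hshift
    exact (hup.reachable.trans hshift).trans hdown.symm.reachable

theorem reachable_of_fst_eq [Nontrivial (ZMod n)] [NeZero s] (h2 : IsUnit (2 : ZMod n))
    (hr : IsUnit r) (i : ZMod (m * s)) (v w : ZMod s → ZMod n) :
    (cpmBar m s n r).Reachable (i, v) (i, w) := by
  have hw : w - v ∈ (cpmBar m s n r).reachableShifts (Prod.mk i) := by
    refine Pi.single_induction (· ∈ _) (w - v) (AddSubgroup.zero_mem _)
      (fun _ _ => AddSubgroup.add_mem _) fun ℓ c => ?_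
    have hℓ : col (i + ((ℓ - col i).val : ℕ)) = ℓ := by
      rw [map_add, map_natCast, ZMod.natCast_zmod_val, add_sub_cancel]
    exact single_mem_reachableShifts_of_col_add_eq h2 hr _ i ℓ hℓ c
  simpa using hw v

theorem exists_reachable_add_intCast [Nontrivial (ZMod n)] (hr : IsUnit r) (k : ℤ)
    (i : ZMod (m * s)) (v : ZMod s → ZMod n) :
    ∃ w, (cpmBar m s n r).Reachable (i, v) (i + (k : ZMod (m * s)), w) := by
  induction k with
  | zero => exact ⟨v, by simp⟩
  | succ k ih =>
    obtain ⟨w, hw⟩ := ih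
    push_cast at hw ⊢
    rw [← add_assoc]
    exact ⟨_, hw.trans (adj_add_single hr _ w (Or.inl rfl)).reachable⟩
  | pred k ih =>
    obtain ⟨w, hw⟩ := ih
    push_cast at hw ⊢
    set j := i + -(k : ZMod (m * s)) - 1
    have hadj := adj_add_single hr j (w - Pi.single (col j) (1 * r ^ j.val)) (Or.inl rfl)
    rw [sub_add_cancel, sub_add_cancel] at hadj
    rw [← add_sub_assoc]
    exact ⟨_, hw.trans hadj.symm.reachable⟩

end CpmBar

theorem stmt17_general (m s n : ℕ) (hs : 0 < s) (hn : 3 ≤ n) (hodd : Odd n)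
    (r : ZMod n) (hu : IsUnit r) :
    (cpmBar m s n r).Connected := by
  have : NeZero s := ⟨hs.ne'⟩
  have : Nontrivial (ZMod n) := ZMod.nontrivial_iff.2 (by omega)
  have h2 : IsUnit (2 : ZMod n) := by
    exact_mod_cast (ZMod.isUnit_iff_coprime 2 n).2 hodd.coprime_two_left
  refine (connected_iff _).2 ⟨fun ⟨i, v⟩ ⟨j, w⟩ => ?_, ⟨(0, 0)⟩⟩
  obtain ⟨w', hw'⟩ := CpmBar.exists_reachable_add_intCast hu (ZMod.cast (j - i) : ℤ) i v
  rw [ZMod.intCast_zmod_cast, add_sub_cancel] at hw'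
  exact hw'.trans (CpmBar.reachable_of_fst_eq h2 hu j w' w)

/-- if n is odd then CPMbar(m,s,n;r) is connected. -/
theorem stmt17 (m s n : ℕ) (hm : 0 < m) (hs : 0 < s) (hn : 3 ≤ n) (hodd : Odd n)
    (r : ZMod n) (hu : IsUnit r) (hr : r ^ (m * s) = 1 ∨ r ^ (m * s) = -1) :
    (cpmBar m s n r).Connected :=
  stmt17_general m s n hs hn hodd r hu
end
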